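/- arXiv:2602.18380 — 5 statements merged into one kernel-verified Lean document; each statement's English description precedes it below -/
import Mathlib

section
/- Let G be a restricted polymatrix game with n players per side, let K = 8 and N = 2n+2, let (A,B) be the bimatrix game constructed from G, and let (x,y) be an ε-WSNE of (A,B) with 0 ≤ ε < 1/(6·K·N). Then |x_i − x_j| ≤ ε/K and |y_i − y_j| ≤ ε/K for all primary indices i, j ∈ [n] (where x_i = x_{i0} + x_{i1} and y_i = y_{i0} + y_{i1}). -/
/-!
Every action of the constructed game has an index in `[2n+2]`. Apart from its polymatrix
payoff, a row action of index `i` collects the column probability at index `i + n + 1`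
(mod `2n+2`), and a column action of index `j` collects the row probability at index `j + n`,
with weight `K = 8` when that index is primary. As these links are bijections of the indices,
the best payoff of each player is at least `1/(2n+2) > 2ε`, while the polymatrix payoff is at
most half of it: at most two neighbours, payoffs at most `2`, and `K · y_k` is itself a
payoff. So an index whose linked index carries no probability is never played, and since
following both links moves an index `j` to `j + 1`, a single unplayed index would leave all of
them unplayed. Hence every index is played, in particular the secondary actions earning
`K · y_k` (resp. `K · x_k`), and their well-supported payoffs differ by at most `ε`.
-/

open Finset
open scoped Classical

/-- `(x, y)` is an `ε`-well-supported Nash equilibrium of the bimatrix game with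
`nr` rows, `nc` columns and payoff matrices `A` (row player) and `B` (column player). -/
def IsWSNE (nr nc : ℕ) (A B : ℕ → ℕ → ℝ) (x y : ℕ → ℝ) (ε : ℝ) : Prop :=
  (∀ i, 0 ≤ x i) ∧ (∀ i, nr ≤ i → x i = 0) ∧ (∑ i ∈ range nr, x i = 1) ∧
  (∀ j, 0 ≤ y j) ∧ (∀ j, nc ≤ j → y j = 0) ∧ (∑ j ∈ range nc, y j = 1) ∧
  (∀ i < nr, 0 < x i → ∀ i' < nr,
    ∑ j ∈ range nc, A i j * y j ≥ ∑ j ∈ range nc, A i' j * y j - ε) ∧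
  (∀ j < nc, 0 < y j → ∀ j' < nc,
    ∑ i ∈ range nr, x i * B i j ≥ ∑ i ∈ range nr, x i * B i j' - ε)

/-- A restricted polymatrix game with `n` players on each side of a bipartite graph.
`Ap i j s t` is the payoff of left player `i` and `Bp i j s t` the payoff of
right player `j` when left player `i` plays `s ∈ {0,1}` and right player `j`
plays `t ∈ {0,1}`. -/
structure RestrictedPolymatrix (n : ℕ) where
  Ap : ℕ → ℕ → ℕ → ℕ → ℝ
  Bp : ℕ → ℕ → ℕ → ℕ → ℝ
  vals_Ap : ∀ i < n, ∀ j < n, ∀ s < 2, ∀ t < 2, Ap i j s t ∈ ({0, 1, 2} : Set ℝ)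
  vals_Bp : ∀ i < n, ∀ j < n, ∀ s < 2, ∀ t < 2, Bp i j s t ∈ ({0, 1, 2} : Set ℝ)
  diag_Ap : ∀ i < n, ∀ j < n,
    (Ap i j 0 1 = 0 ∧ Ap i j 1 0 = 0) ∨ (Ap i j 0 0 = 0 ∧ Ap i j 1 1 = 0)
  diag_Bp : ∀ i < n, ∀ j < n,
    (Bp i j 0 1 = 0 ∧ Bp i j 1 0 = 0) ∨ (Bp i j 0 0 = 0 ∧ Bp i j 1 1 = 0)
  indeg_left : ∀ i < n,
    (((range n).filter fun j => ∃ s < 2, ∃ t < 2, Ap i j s t ≠ 0).card) ≤ 2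
  indeg_right : ∀ j < n,
    (((range n).filter fun i => ∃ s < 2, ∃ t < 2, Bp i j s t ≠ 0).card) ≤ 2
  outdeg_right : ∀ j < n,
    (((range n).filter fun i => ∃ s < 2, ∃ t < 2, Ap i j s t ≠ 0).card) ≤ 2
  outdeg_left : ∀ i < n,
    (((range n).filter fun j => ∃ s < 2, ∃ t < 2, Bp i j s t ≠ 0).card) ≤ 2

/-- The index (in `[2n+2]`) corresponding to a bimatrix action `a < 3n+2`:
primary actions `(i,t)` (for `i < n`, `t ∈ {0,1}`) are encoded as `a = 2i+t`, and
the secondary action of index `i ∈ {n,…,2n+1}` is encoded as `a = n+i`. -/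
def actionIndex (n a : ℕ) : ℕ := if a < 2*n then a / 2 else a - n

/-- Row player's payoff matrix of the bimatrix game constructed from a restricted
polymatrix game (here `K = 8`, `N = 2n+2`). -/
noncomputable def consA (n : ℕ) (G : RestrictedPolymatrix n) : ℕ → ℕ → ℝ := fun a b =>
  if a < 2*n ∧ b < 2*n then G.Ap (a/2) (b/2) (a % 2) (b % 2)
  else if ((actionIndex n b : ℤ) - (actionIndex n a : ℤ)) % (2*n+2) = ((n : ℤ)+1) then
    (if 2*n ≤ a ∧ b < 2*n then 8 else 1)
  else 0

/-- Column player's payoff matrix of the constructed bimatrix game. -/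
noncomputable def consB (n : ℕ) (G : RestrictedPolymatrix n) : ℕ → ℕ → ℝ := fun a b =>
  if a < 2*n ∧ b < 2*n then G.Bp (a/2) (b/2) (a % 2) (b % 2)
  else if ((actionIndex n b : ℤ) - (actionIndex n a : ℤ)) % (2*n+2) = ((n : ℤ)+2) then
    (if a < 2*n ∧ 2*n ≤ b then 8 else 1)
  else 0

/-- Aggregated probability of index `i ∈ [2n+2]`: for a primary index `i < n` it is
the total probability of the two primary actions of index `i`; for a secondary
index `n ≤ i < 2n+2` it is the probability of the corresponding secondary action. -/
def aggProb (n : ℕ) (x : ℕ → ℝ) (i : ℕ) : ℝ :=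
  if i < n then x (2*i) + x (2*i+1) else x (n + i)
theorem Int.emod_eq_iff_of_lt {c d N : ℤ} (hc₀ : -N < c) (hc : c < N) (hd₀ : 0 ≤ d)
    (hd : d < N) : c % N = d ↔ c = d ∨ c = d - N := by
  rcases le_or_gt 0 c with h | h
  · rw [Int.emod_eq_of_lt h hc]; omega
  · rw [Int.emod_eq_add_self_emod, Int.emod_eq_of_lt (by omega) (by omega)]; omega

theorem forall_lt_of_step_of_wrap {P : ℕ → Prop} {N : ℕ}
    (hstep : ∀ j, j + 1 < N → P j → P (j + 1)) (hwrap : P (N - 1) → P 0) {j₀ : ℕ}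
    (hj₀ : j₀ < N) (h : P j₀) : ∀ j < N, P j := by
  have hup : ∀ i, P i → ∀ k, i + k < N → P (i + k) := by
    intro i hi k
    induction k with
    | zero => exact fun _ => hi
    | succ k ih => exact fun hk => hstep (i + k) hk (ih (by omega))
  have hlast : P (N - 1) := by
    have := hup j₀ h (N - 1 - j₀) (by omega)
    rwa [show j₀ + (N - 1 - j₀) = N - 1 by omega] at this
  intro j hj
  simpa using hup 0 (hwrap hlast) j (by omega)

namespace PolymatrixReduction

variable {n : ℕ}

lemma actionIndex_lt {a : ℕ} (ha : a < 3 * n + 2) : actionIndex n a < 2 * n + 2 := by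
  unfold actionIndex; split_ifs <;> omega

lemma exists_actionIndex_eq {i : ℕ} (hi : i < 2 * n + 2) :
    ∃ a < 3 * n + 2, actionIndex n a = i :=
  ⟨if i < n then 2 * i else n + i, by split_ifs <;> omega,
    by unfold actionIndex; split_ifs <;> omega⟩

lemma aggProb_nonneg {z : ℕ → ℝ} (hz : ∀ a, 0 ≤ z a) (i : ℕ) : 0 ≤ aggProb n z i := by
  unfold aggProb; split_ifs
  · exact add_nonneg (hz _) (hz _)
  · exact hz _

lemma sum_filter_actionIndex_eq {i : ℕ} (z : ℕ → ℝ) (hi : i < 2 * n + 2) :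
    ∑ a ∈ range (3 * n + 2) with actionIndex n a = i, z a = aggProb n z i := by
  unfold aggProb
  split_ifs with h
  · rw [show {a ∈ range (3 * n + 2) | actionIndex n a = i} = {2 * i, 2 * i + 1} by
      ext a; rw [mem_filter, mem_range, mem_insert, mem_singleton, actionIndex]
      split_ifs <;> omega, sum_pair (by omega)]
  · rw [show {a ∈ range (3 * n + 2) | actionIndex n a = i} = {n + i} by
      ext a; rw [mem_filter, mem_range, mem_singleton, actionIndex]
      split_ifs <;> omega, sum_singleton]

lemma sum_ite_actionIndex_mem (z : ℕ → ℝ) {S : Finset ℕ} (hS : S ⊆ range (2 * n + 2)) :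
    ∑ a ∈ range (3 * n + 2), (if actionIndex n a ∈ S then z a else 0) =
      ∑ i ∈ S, aggProb n z i := by
  calc _ = ∑ a ∈ range (3 * n + 2), ∑ i ∈ S, if actionIndex n a = i then z a else 0 :=
        sum_congr rfl fun a _ => (sum_ite_eq S _ _).symm
    _ = ∑ i ∈ S, ∑ a ∈ range (3 * n + 2) with actionIndex n a = i, z a := by
        rw [sum_comm]; simp only [sum_filter]
    _ = _ := sum_congr rfl fun i hi => sum_filter_actionIndex_eq z (mem_range.mp (hS hi))

lemma sum_aggProb (n : ℕ) (z : ℕ → ℝ) :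
    ∑ i ∈ range (2 * n + 2), aggProb n z i = ∑ a ∈ range (3 * n + 2), z a := by
  rw [← sum_ite_actionIndex_mem z subset_rfl]
  exact sum_congr rfl fun a ha => if_pos (mem_range.mpr (actionIndex_lt (mem_range.mp ha)))

/-- `rowTarget n i ≡ i + (n + 1) (mod 2n+2)`: the column index whose probability the row
actions of index `i` collect in `consA`. -/
def rowTarget (n i : ℕ) : ℕ := if i ≤ n then i + (n + 1) else i - (n + 1)

/-- `colSource n j ≡ j + n (mod 2n+2)`: the row index `i` with `j ≡ i + (n + 2)`, whose
probability the column actions of index `j` collect in `consB`. -/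
def colSource (n j : ℕ) : ℕ := if j < n + 2 then j + n else j - (n + 2)

lemma rowTarget_lt {i : ℕ} (hi : i < 2 * n + 2) : rowTarget n i < 2 * n + 2 := by
  unfold rowTarget; split_ifs <;> omega

lemma rowTarget_rowTarget {i : ℕ} (hi : i < 2 * n + 2) : rowTarget n (rowTarget n i) = i := by
  unfold rowTarget; split_ifs <;> omega

lemma rowTarget_surj : ∀ j < 2 * n + 2, ∃ i < 2 * n + 2, rowTarget n i = j :=
  fun _ hj => ⟨_, rowTarget_lt hj, rowTarget_rowTarget hj⟩

lemma rowTarget_secondary : ∀ k < n, ∃ i < 2 * n + 2, n ≤ i ∧ rowTarget n i = k :=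
  fun k _ => ⟨n + 1 + k, by omega, by omega, by unfold rowTarget; split_ifs <;> omega⟩

lemma colSource_lt {j : ℕ} (hj : j < 2 * n + 2) : colSource n j < 2 * n + 2 := by
  unfold colSource; split_ifs <;> omega

lemma colSource_surj : ∀ j < 2 * n + 2, ∃ i < 2 * n + 2, colSource n i = j :=
  fun j _ => ⟨if j < n then j + n + 2 else j - n, by split_ifs <;> omega,
    by unfold colSource; split_ifs <;> omega⟩

lemma colSource_secondary : ∀ k < n, ∃ i < 2 * n + 2, n ≤ i ∧ colSource n i = k :=
  fun k _ => ⟨n + 2 + k, by omega, by omega, by unfold colSource; split_ifs <;> omega⟩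

/-- A zero of `y` at index `j` forces one of `x` at `rowTarget n j`, hence one of `y` at
`j + 1 (mod 2n+2)`. -/
lemma colSource_succ (j : ℕ) : colSource n (j + 1) = rowTarget n j := by
  unfold colSource rowTarget; split_ifs <;> omega

lemma colSource_zero : colSource n 0 = rowTarget n (2 * n + 2 - 1) := by
  unfold colSource rowTarget; split_ifs <;> omega

def primaryPart (n : ℕ) (M : ℕ → ℕ → ℕ → ℕ → ℝ) (a b : ℕ) : ℝ :=
  if a < 2 * n ∧ b < 2 * n then M (a / 2) (b / 2) (a % 2) (b % 2) else 0

def swapPayoff (M : ℕ → ℕ → ℕ → ℕ → ℝ) : ℕ → ℕ → ℕ → ℕ → ℝ := fun i j s t => M j i t s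

lemma primaryPart_swapPayoff (M : ℕ → ℕ → ℕ → ℕ → ℝ) (a b : ℕ) :
    primaryPart n (swapPayoff M) b a = primaryPart n M a b := by
  simp only [primaryPart, swapPayoff, and_comm]

/-- Payoff of own action `a` against opponent action `b` in the game built from the polymatrix
payoffs `M`, when own index `i` is linked to opponent index `τ i`: both `consA` and (read from
the column player's side) `consB` have this shape. -/
def consPayoff (n : ℕ) (M : ℕ → ℕ → ℕ → ℕ → ℝ) (τ : ℕ → ℕ) (a b : ℕ) : ℝ :=
  primaryPart n M a b +
    if actionIndex n b = τ (actionIndex n a) then (if 2 * n ≤ a ∧ b < 2 * n then 8 else 1)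
    else 0

def payoff (n : ℕ) (M : ℕ → ℕ → ℕ → ℕ → ℝ) (τ : ℕ → ℕ) (y : ℕ → ℝ) (a : ℕ) : ℝ :=
  ∑ b ∈ range (3 * n + 2), consPayoff n M τ a b * y b

lemma consA_eq_consPayoff {a b : ℕ} (G : RestrictedPolymatrix n) (ha : a < 3 * n + 2)
    (hb : b < 3 * n + 2) : consA n G a b = consPayoff n G.Ap (rowTarget n) a b := by
  have hia := actionIndex_lt ha
  have hib := actionIndex_lt hb
  have hlink : ((actionIndex n b : ℤ) - actionIndex n a) % (2 * n + 2) = (n : ℤ) + 1 ↔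
      actionIndex n b = rowTarget n (actionIndex n a) := by
    rw [Int.emod_eq_iff_of_lt (N := 2 * n + 2) (d := n + 1) (by omega) (by omega) (by omega)
      (by omega), rowTarget]
    split_ifs <;> omega
  unfold consA consPayoff primaryPart
  by_cases h : a < 2 * n ∧ b < 2 * n
  · have : actionIndex n b ≠ rowTarget n (actionIndex n a) := by
      unfold rowTarget actionIndex; split_ifs <;> omega
    simp [h, this]
  · simp only [h, if_false, zero_add, hlink]

lemma consB_eq_consPayoff {a b : ℕ} (G : RestrictedPolymatrix n) (hn : 0 < n)
    (ha : a < 3 * n + 2) (hb : b < 3 * n + 2) :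
    consB n G a b = consPayoff n (swapPayoff G.Bp) (colSource n) b a := by
  have hia := actionIndex_lt ha
  have hib := actionIndex_lt hb
  have hlink : ((actionIndex n b : ℤ) - actionIndex n a) % (2 * n + 2) = (n : ℤ) + 2 ↔
      actionIndex n a = colSource n (actionIndex n b) := by
    rw [Int.emod_eq_iff_of_lt (N := 2 * n + 2) (d := n + 2) (by omega) (by omega) (by omega)
      (by omega), colSource]
    split_ifs <;> omega
  rw [consPayoff, primaryPart_swapPayoff]
  unfold consB primaryPart
  by_cases h : a < 2 * n ∧ b < 2 * n
  · have : actionIndex n a ≠ colSource n (actionIndex n b) := by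
      unfold colSource actionIndex; split_ifs <;> omega
    simp [h, this]
  · simp only [h, if_false, zero_add, hlink, and_comm]

section Payoff

variable {M : ℕ → ℕ → ℕ → ℕ → ℝ} {τ : ℕ → ℕ} {y : ℕ → ℝ} {a : ℕ}

lemma primaryPart_mem_Icc
    (hM : ∀ i < n, ∀ j < n, ∀ s < 2, ∀ t < 2, M i j s t ∈ ({0, 1, 2} : Set ℝ)) (b : ℕ) :
    primaryPart n M a b ∈ Set.Icc 0 2 := by
  unfold primaryPart
  split_ifs
  · have hval := hM (a / 2) (by omega) (b / 2) (by omega) (a % 2) (by omega) (b % 2) (by omega)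
    simp only [Set.mem_insert_iff, Set.mem_singleton_iff] at hval
    rcases hval with h | h | h <;> rw [h] <;> norm_num
  · norm_num

/-- Each primary action has at most two neighbours, each paying at most `2` per unit of
probability, so against `y` it earns at most `4 · max_k y_k ≤ U / 2`. -/
lemma sum_primaryPart_mul_le
    (hM : ∀ i < n, ∀ j < n, ∀ s < 2, ∀ t < 2, M i j s t ∈ ({0, 1, 2} : Set ℝ))
    (hdeg : ∀ i < n, #{j ∈ range n | ∃ s < 2, ∃ t < 2, M i j s t ≠ 0} ≤ 2)
    (hy : ∀ b, 0 ≤ y b) {U : ℝ} (hU0 : 0 ≤ U) (hU : ∀ k < n, 8 * aggProb n y k ≤ U) :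
    ∑ b ∈ range (3 * n + 2), primaryPart n M a b * y b ≤ U / 2 := by
  by_cases ha : a < 2 * n
  swap
  · simp only [primaryPart, ha, false_and, if_false, zero_mul, sum_const_zero]
    linarith
  obtain ⟨S, hSn, hScard, hzero⟩ : ∃ S ⊆ range n, #S ≤ 2 ∧
      ∀ j < n, j ∉ S → ∀ t < 2, M (a / 2) j (a % 2) t = 0 := by
    refine ⟨_, fun j hj => ?_, hdeg (a / 2) (by omega), fun j hj hjS t ht => ?_⟩
    · simp only [mem_filter] at hj
      exact hj.1
    · simp only [mem_filter, mem_range, not_and, not_exists, not_not] at hjS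
      exact hjS hj _ (Nat.mod_lt _ two_pos) t ht
  have hS : S ⊆ range (2 * n + 2) := hSn.trans (range_subset_range.mpr (by omega))
  have hterm : ∀ b ∈ range (3 * n + 2),
      primaryPart n M a b * y b ≤ 2 * (if actionIndex n b ∈ S then y b else 0) := by
    intro b _
    by_cases hb : b < 2 * n
    · rw [show actionIndex n b = b / 2 from if_pos hb]
      split_ifs with hbS
      · exact mul_le_mul_of_nonneg_right (primaryPart_mem_Icc hM b).2 (hy b)
      · rw [primaryPart, if_pos ⟨ha, hb⟩, hzero _ (by omega) hbS _ (Nat.mod_lt _ two_pos),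
          zero_mul, mul_zero]
    · rw [show primaryPart n M a b = 0 from if_neg (by omega), zero_mul]
      split_ifs <;> linarith [hy b]
  calc ∑ b ∈ range (3 * n + 2), primaryPart n M a b * y b
      ≤ 2 * ∑ b ∈ range (3 * n + 2), (if actionIndex n b ∈ S then y b else 0) := by
        rw [mul_sum]; exact sum_le_sum hterm
    _ = 2 * ∑ j ∈ S, aggProb n y j := by rw [sum_ite_actionIndex_mem y hS]
    _ ≤ 2 * ∑ _j ∈ S, U / 8 := by
        gcongr with j hj
        linarith [hU j (mem_range.mp (hSn hj))]
    _ = #S * (U / 4) := by rw [sum_const, nsmul_eq_mul]; ring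
    _ ≤ 2 * (U / 4) := by gcongr; exact_mod_cast hScard
    _ = U / 2 := by ring

lemma payoff_eq (hτ : τ (actionIndex n a) < 2 * n + 2) :
    payoff n M τ y a = ∑ b ∈ range (3 * n + 2), primaryPart n M a b * y b +
      (if 2 * n ≤ a ∧ τ (actionIndex n a) < n then 8 else 1) *
        aggProb n y (τ (actionIndex n a)) := by
  unfold payoff consPayoff
  simp only [add_mul, sum_add_distrib]
  congr 1
  rw [← sum_filter_actionIndex_eq y hτ, mul_sum, sum_filter]
  refine sum_congr rfl fun b hb => ?_
  by_cases hidx : actionIndex n b = τ (actionIndex n a)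
  · have : b < 2 * n ↔ τ (actionIndex n a) < n := by
      have := mem_range.mp hb
      rw [← hidx, actionIndex]; split_ifs <;> omega
    simp only [hidx, if_true, this]
  · simp only [hidx, if_false, zero_mul]

lemma aggProb_le_payoff
    (hM : ∀ i < n, ∀ j < n, ∀ s < 2, ∀ t < 2, M i j s t ∈ ({0, 1, 2} : Set ℝ))
    (hy : ∀ b, 0 ≤ y b) (hτ : τ (actionIndex n a) < 2 * n + 2) :
    aggProb n y (τ (actionIndex n a)) ≤ payoff n M τ y a := by
  rw [payoff_eq hτ]
  have hprim : 0 ≤ ∑ b ∈ range (3 * n + 2), primaryPart n M a b * y b :=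
    sum_nonneg fun b _ => mul_nonneg (primaryPart_mem_Icc hM b).1 (hy b)
  have hw : (1 : ℝ) ≤ if 2 * n ≤ a ∧ τ (actionIndex n a) < n then 8 else 1 := by
    split_ifs <;> norm_num
  nlinarith [aggProb_nonneg (n := n) hy (τ (actionIndex n a))]

lemma payoff_secondary {i : ℕ} (hni : n ≤ i) (hi : i < 2 * n + 2) (hτi : τ i < n) :
    payoff n M τ y (n + i) = 8 * aggProb n y (τ i) := by
  have hidx : actionIndex n (n + i) = i := by unfold actionIndex; split_ifs <;> omega
  rw [payoff_eq (by rw [hidx]; omega), hidx, if_pos ⟨by omega, hτi⟩]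
  simp [primaryPart, show ¬ n + i < 2 * n by omega]

lemma payoff_le_of_aggProb_eq_zero
    (hM : ∀ i < n, ∀ j < n, ∀ s < 2, ∀ t < 2, M i j s t ∈ ({0, 1, 2} : Set ℝ))
    (hdeg : ∀ i < n, #{j ∈ range n | ∃ s < 2, ∃ t < 2, M i j s t ≠ 0} ≤ 2)
    (hy : ∀ b, 0 ≤ y b) {U : ℝ} (hU0 : 0 ≤ U) (hU : ∀ k < n, 8 * aggProb n y k ≤ U)
    (hτ : τ (actionIndex n a) < 2 * n + 2) (h0 : aggProb n y (τ (actionIndex n a)) = 0) :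
    payoff n M τ y a ≤ U / 2 := by
  rw [payoff_eq hτ, h0, mul_zero, add_zero]
  exact sum_primaryPart_mul_le hM hdeg hy hU0 hU

end Payoff

section Equilibrium

variable {M : ℕ → ℕ → ℕ → ℕ → ℝ} {τ : ℕ → ℕ} {x y : ℕ → ℝ} {ε U : ℝ}

lemma eight_mul_aggProb_le (hsec : ∀ k < n, ∃ i < 2 * n + 2, n ≤ i ∧ τ i = k)
    (hU : ∀ a < 3 * n + 2, payoff n M τ y a ≤ U) {k : ℕ} (hk : k < n) :
    8 * aggProb n y k ≤ U := by
  obtain ⟨i, hi, hni, rfl⟩ := hsec k hk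
  rw [← payoff_secondary hni hi hk]
  exact hU _ (by omega)

lemma one_le_mul_of_payoff_le
    (hM : ∀ i < n, ∀ j < n, ∀ s < 2, ∀ t < 2, M i j s t ∈ ({0, 1, 2} : Set ℝ))
    (hτ : ∀ i < 2 * n + 2, τ i < 2 * n + 2)
    (hsurj : ∀ j < 2 * n + 2, ∃ i < 2 * n + 2, τ i = j)
    (hy : ∀ b, 0 ≤ y b) (hy1 : ∑ b ∈ range (3 * n + 2), y b = 1)
    (hU : ∀ a < 3 * n + 2, payoff n M τ y a ≤ U) : 1 ≤ (2 * n + 2) * U := by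
  calc (1 : ℝ) = ∑ j ∈ range (2 * n + 2), aggProb n y j := by rw [sum_aggProb, hy1]
    _ ≤ ∑ _j ∈ range (2 * n + 2), U := sum_le_sum fun j hj => ?_
    _ = (2 * n + 2) * U := by simp
  obtain ⟨i, hi, rfl⟩ := hsurj j (mem_range.mp hj)
  obtain ⟨a, ha, rfl⟩ := exists_actionIndex_eq hi
  exact (aggProb_le_payoff hM hy (hτ _ hi)).trans (hU a ha)

/-- The best payoff is at least `1 / (2n+2) > 2ε`, while an action whose linked opponent index
is never played earns at most half of it. -/
lemma aggProb_eq_zero_of_aggProb_comp_eq_zero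
    (hM : ∀ i < n, ∀ j < n, ∀ s < 2, ∀ t < 2, M i j s t ∈ ({0, 1, 2} : Set ℝ))
    (hdeg : ∀ i < n, #{j ∈ range n | ∃ s < 2, ∃ t < 2, M i j s t ≠ 0} ≤ 2)
    (hτ : ∀ i < 2 * n + 2, τ i < 2 * n + 2)
    (hsurj : ∀ j < 2 * n + 2, ∃ i < 2 * n + 2, τ i = j)
    (hsec : ∀ k < n, ∃ i < 2 * n + 2, n ≤ i ∧ τ i = k)
    (hx : ∀ a, 0 ≤ x a) (hy : ∀ b, 0 ≤ y b) (hy1 : ∑ b ∈ range (3 * n + 2), y b = 1)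
    (hε : ε < 1 / (6 * 8 * (2 * (n : ℝ) + 2)))
    (hbr : ∀ a < 3 * n + 2, 0 < x a → ∀ a' < 3 * n + 2,
      payoff n M τ y a ≥ payoff n M τ y a' - ε)
    {i : ℕ} (hi : i < 2 * n + 2) (h0 : aggProb n y (τ i) = 0) : aggProb n x i = 0 := by
  obtain ⟨a₀, ha₀, hmax⟩ := exists_max_image (range (3 * n + 2)) (payoff n M τ y) ⟨0, by simp⟩
  set U := payoff n M τ y a₀
  have hU : ∀ a < 3 * n + 2, payoff n M τ y a ≤ U := fun a ha => hmax a (mem_range.mpr ha)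
  have hNU := one_le_mul_of_payoff_le hM hτ hsurj hy hy1 hU
  have hU0 : 0 < U := pos_of_mul_pos_right (a := 2 * (n : ℝ) + 2) (by linarith) (by positivity)
  have hεU : ε < U / 2 := by
    have : 1 / (6 * 8 * (2 * (n : ℝ) + 2)) ≤ U / 48 := by
      rw [div_le_div_iff₀ (by positivity) (by norm_num)]; linarith
    linarith
  rw [← sum_filter_actionIndex_eq x hi]
  refine sum_eq_zero fun a hai => ?_
  obtain ⟨ha, rfl⟩ := mem_filter.mp hai
  have hpay := payoff_le_of_aggProb_eq_zero hM hdeg hy hU0.le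
    (fun k hk => eight_mul_aggProb_le hsec hU hk) (hτ _ hi) h0
  by_contra hne
  have := hbr a (mem_range.mp ha) ((hx a).lt_of_ne' hne) a₀ (mem_range.mp ha₀)
  linarith

lemma abs_sub_aggProb_le (hsec : ∀ k < n, ∃ i < 2 * n + 2, n ≤ i ∧ τ i = k)
    (hbr : ∀ a < 3 * n + 2, 0 < x a → ∀ a' < 3 * n + 2,
      payoff n M τ y a ≥ payoff n M τ y a' - ε)
    (hx : ∀ i < 2 * n + 2, 0 < aggProb n x i) {k k' : ℕ} (hk : k < n) (hk' : k' < n) :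
    |aggProb n y k - aggProb n y k'| ≤ ε / 8 := by
  have key : ∀ k < n, ∀ k' < n, aggProb n y k' - aggProb n y k ≤ ε / 8 := by
    intro k hk k' hk'
    obtain ⟨i, hi, hni, rfl⟩ := hsec k hk
    obtain ⟨i', hi', hni', rfl⟩ := hsec k' hk'
    have hxi : 0 < x (n + i) := by simpa [aggProb, show ¬ i < n by omega] using hx i hi
    have := hbr (n + i) (by omega) hxi (n + i') (by omega)
    rw [payoff_secondary hni hi hk, payoff_secondary hni' hi' hk'] at this
    linarith
  exact abs_sub_le_iff.mpr ⟨key k' hk' k hk, key k hk k' hk'⟩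

end Equilibrium

lemma aggProb_pos_of_zero_propagation {x y : ℕ → ℝ} (hy : ∀ b, 0 ≤ y b)
    (hy1 : ∑ b ∈ range (3 * n + 2), y b = 1)
    (hxzero : ∀ i < 2 * n + 2, aggProb n y (rowTarget n i) = 0 → aggProb n x i = 0)
    (hyzero : ∀ j < 2 * n + 2, aggProb n x (colSource n j) = 0 → aggProb n y j = 0) :
    ∀ j < 2 * n + 2, 0 < aggProb n y j := by
  have hstep : ∀ j < 2 * n + 2, ∀ j' < 2 * n + 2, colSource n j' = rowTarget n j →
      aggProb n y j = 0 → aggProb n y j' = 0 := fun j hj j' hj' hlink h =>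
    hyzero j' hj' (hlink ▸ hxzero _ (rowTarget_lt hj) (by rwa [rowTarget_rowTarget hj]))
  by_contra! ⟨j₀, hj₀, hle⟩
  have hzero := forall_lt_of_step_of_wrap (P := fun j => aggProb n y j = 0)
    (fun j hj => hstep j (by omega) (j + 1) hj (colSource_succ j))
    (hstep _ (by omega) 0 (by omega) colSource_zero) hj₀
    (le_antisymm hle (aggProb_nonneg hy j₀))
  have hsum := sum_aggProb n y
  rw [sum_eq_zero fun j hj => hzero j (mem_range.mp hj), hy1] at hsum
  norm_num at hsum

lemma sum_consA_mul (G : RestrictedPolymatrix n) (y : ℕ → ℝ) {a : ℕ} (ha : a < 3 * n + 2) :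
    ∑ b ∈ range (3 * n + 2), consA n G a b * y b = payoff n G.Ap (rowTarget n) y a :=
  sum_congr rfl fun b hb => by rw [consA_eq_consPayoff G ha (mem_range.mp hb)]

lemma sum_mul_consB (G : RestrictedPolymatrix n) (hn : 0 < n) (x : ℕ → ℝ) {b : ℕ}
    (hb : b < 3 * n + 2) :
    ∑ a ∈ range (3 * n + 2), x a * consB n G a b =
      payoff n (swapPayoff G.Bp) (colSource n) x b :=
  sum_congr rfl fun a ha => by rw [consB_eq_consPayoff G hn (mem_range.mp ha) hb, mul_comm]

lemma vals_swapPayoff (G : RestrictedPolymatrix n) :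
    ∀ i < n, ∀ j < n, ∀ s < 2, ∀ t < 2, swapPayoff G.Bp i j s t ∈ ({0, 1, 2} : Set ℝ) :=
  fun i hi j hj s hs t ht => G.vals_Bp j hj i hi t ht s hs

lemma indeg_swapPayoff (G : RestrictedPolymatrix n) :
    ∀ i < n, #{j ∈ range n | ∃ s < 2, ∃ t < 2, swapPayoff G.Bp i j s t ≠ 0} ≤ 2 := by
  intro i hi
  convert G.indeg_right i hi using 3 with j
  exact ⟨fun ⟨s, hs, t, ht, h⟩ => ⟨t, ht, s, hs, h⟩, fun ⟨s, hs, t, ht, h⟩ => ⟨t, ht, s, hs, h⟩⟩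

end PolymatrixReduction

open PolymatrixReduction in
theorem stmt1_general (n : ℕ) (G : RestrictedPolymatrix n) (ε : ℝ) (x y : ℕ → ℝ)
    (hε : ε < 1 / (6 * 8 * (2 * (n:ℝ) + 2)))
    (hwsne : IsWSNE (3*n+2) (3*n+2) (consA n G) (consB n G) x y ε) :
    ∀ i < n, ∀ j < n,
      |aggProb n x i - aggProb n x j| ≤ ε / 8 ∧
      |aggProb n y i - aggProb n y j| ≤ ε / 8 := by
  intro i hi j hj
  obtain ⟨hx, -, hx1, hy, -, hy1, hrow, hcol⟩ := hwsne
  have hbrx : ∀ a < 3 * n + 2, 0 < x a → ∀ a' < 3 * n + 2,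
      payoff n G.Ap (rowTarget n) y a ≥ payoff n G.Ap (rowTarget n) y a' - ε := by
    intro a ha hxa a' ha'
    rw [← sum_consA_mul G y ha, ← sum_consA_mul G y ha']
    exact hrow a ha hxa a' ha'
  have hbry : ∀ b < 3 * n + 2, 0 < y b → ∀ b' < 3 * n + 2,
      payoff n (swapPayoff G.Bp) (colSource n) x b ≥
        payoff n (swapPayoff G.Bp) (colSource n) x b' - ε := by
    intro b hb hyb b' hb'
    rw [← sum_mul_consB G (by omega) x hb, ← sum_mul_consB G (by omega) x hb']
    exact hcol b hb hyb b' hb'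
  have hxzero : ∀ i < 2 * n + 2, aggProb n y (rowTarget n i) = 0 → aggProb n x i = 0 :=
    fun _ => aggProb_eq_zero_of_aggProb_comp_eq_zero G.vals_Ap G.indeg_left
      (fun _ => rowTarget_lt) rowTarget_surj rowTarget_secondary hx hy hy1 hε hbrx
  have hyzero : ∀ j < 2 * n + 2, aggProb n x (colSource n j) = 0 → aggProb n y j = 0 :=
    fun _ => aggProb_eq_zero_of_aggProb_comp_eq_zero (vals_swapPayoff G) (indeg_swapPayoff G)
      (fun _ => colSource_lt) colSource_surj colSource_secondary hy hx hx1 hε hbry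
  have hypos := aggProb_pos_of_zero_propagation hy hy1 hxzero hyzero
  have hxpos : ∀ i < 2 * n + 2, 0 < aggProb n x i := by
    intro i hi
    obtain ⟨j, hj, rfl⟩ := colSource_surj i hi
    exact (aggProb_nonneg hx _).lt_of_ne fun h => (hypos j hj).ne' (hyzero j hj h.symm)
  exact ⟨abs_sub_aggProb_le colSource_secondary hbry hypos hi hj,
    abs_sub_aggProb_le rowTarget_secondary hbrx hxpos hi hj⟩

/-- The two players of the constructed bimatrix game randomize almost uniformly
over their primary indices: the aggregated probabilities of any two primary
indices differ by at most `ε/K` with `K = 8`. -/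
theorem stmt1 (n : ℕ) (G : RestrictedPolymatrix n) (ε : ℝ) (x y : ℕ → ℝ)
    (hε0 : 0 ≤ ε) (hε : ε < 1 / (6 * 8 * (2 * (n:ℝ) + 2)))
    (hwsne : IsWSNE (3*n+2) (3*n+2) (consA n G) (consB n G) x y ε) :
    ∀ i < n, ∀ j < n,
      |aggProb n x i - aggProb n x j| ≤ ε / 8 ∧
      |aggProb n y i - aggProb n y j| ≤ ε / 8 :=
  stmt1_general n G ε x y hε hwsne
end

section
/- Let G be a restricted polymatrix game with n players per side, let K = 8 and N = 2n+2, let (A,B) be the bimatrix game constructed from G, and let (x,y) be an ε-WSNE of (A,B) with 0 ≤ ε < 1/(6·K·N). For i, j ∈ [n] define p_i = x_{i1}/(x_{i0} + x_{i1}) and q_j = y_{j1}/(y_{j0} + y_{j1}) (these denominators are positive). Then the profile in which left player i of G plays action 1 with probability p_i and right player j of G plays action 1 with probability q_j is a (3·K·N·ε)-WSNE of G. -/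
/-!
Both payoff matrices of the constructed game have one cyclic shape (`cycMatrix`, offset `n + 1`
for the rows and, after transposition, `n` for the columns): besides the polymatrix payoffs of
the primary block, an action of index `u` earns the opponent's total weight at index
`u + r (mod 2n+2)`, eight-fold when a secondary action meets a primary one.

If the opponent puts no weight on the partner index of `u`, every action of index `u` is worth
at most half the maximal payoff `V`, which exceeds `2ε`; so it is not played. Zeros therefore
propagate around the cycle of indices, and total mass one forces every index to carry weight.
The secondary actions then pin the primary weights `Y_j` into `[(V - ε)/8, V/8]`, and since
`V ≥ 1/N`, rescaling the `ε`-comparison of two actions of one polymatrix player by these nearly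
equal weights (at most two of them, by the degree bound) costs a factor of at most `3KN`.
-/

open Finset
open scoped Classical

/-- Expected payoff of left player `i` of the polymatrix game for playing action
`s ∈ {0,1}`, when each right player `j` plays action `1` with probability `q j`. -/
noncomputable def leftPayoff (n : ℕ) (G : RestrictedPolymatrix n) (q : ℕ → ℝ) (i s : ℕ) : ℝ :=
  ∑ j ∈ range n, ((1 - q j) * G.Ap i j s 0 + q j * G.Ap i j s 1)

/-- Expected payoff of right player `j` of the polymatrix game for playing action
`t ∈ {0,1}`, when each left player `i` plays action `1` with probability `p i`. -/
noncomputable def rightPayoff (n : ℕ) (G : RestrictedPolymatrix n) (p : ℕ → ℝ) (j t : ℕ) : ℝ :=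
  ∑ i ∈ range n, ((1 - p i) * G.Bp i j 0 t + p i * G.Bp i j 1 t)

/-- The profile in which left player `i` plays action `1` with probability `p i` and
right player `j` plays action `1` with probability `q j` is a `δ`-WSNE of the
restricted polymatrix game `G`. -/
def PolyIsWSNE (n : ℕ) (G : RestrictedPolymatrix n) (p q : ℕ → ℝ) (δ : ℝ) : Prop :=
  (∀ i < n, 0 ≤ p i ∧ p i ≤ 1) ∧ (∀ j < n, 0 ≤ q j ∧ q j ≤ 1) ∧
  (∀ i < n, (0 < p i → leftPayoff n G q i 1 ≥ leftPayoff n G q i 0 - δ) ∧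
            (p i < 1 → leftPayoff n G q i 0 ≥ leftPayoff n G q i 1 - δ)) ∧
  (∀ j < n, (0 < q j → rightPayoff n G p j 1 ≥ rightPayoff n G p j 0 - δ) ∧
            (q j < 1 → rightPayoff n G p j 0 ≥ rightPayoff n G p j 1 - δ))

lemma Int.emod_eq_of_neg_lt {k N : ℤ} (h₁ : -N ≤ k) (h₂ : k < N) :
    (0 ≤ k → k % N = k) ∧ (k < 0 → k % N = k + N) :=
  ⟨fun hk => Int.emod_eq_of_lt hk h₂, fun hk => by
    rw [← Int.add_emod_right, Int.emod_eq_of_lt (by omega) (by omega)]⟩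

lemma Nat.mod_eq_of_lt_two_mul {m N : ℕ} (h : m < 2 * N) :
    (m < N → m % N = m) ∧ (N ≤ m → m % N = m - N) :=
  ⟨Nat.mod_eq_of_lt, fun hm => by rw [Nat.mod_eq_sub_mod hm, Nat.mod_eq_of_lt (by omega)]⟩

lemma Int.emod_natCast_sub_eq_iff {u v r N : ℕ} (hu : u < N) (hv : v < N) (hr : r < N) :
    ((v : ℤ) - u) % N = r ↔ v = (u + r) % N := by
  have hz := Int.emod_eq_of_neg_lt (k := (v : ℤ) - u) (N := N) (by omega) (by omega)
  have hn := Nat.mod_eq_of_lt_two_mul (m := u + r) (N := N) (by omega)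
  omega

lemma Int.neg_emod_eq_of_emod_eq {k N m m' : ℤ} (hm : 0 < m) (hm' : 0 < m') (hN : m + m' = N)
    (h : k % N = m) : (-k) % N = m' := by
  have hk : -k = m' + N * (-(k / N) - 1) := by linarith [Int.emod_add_mul_ediv k N]
  rw [hk, Int.add_mul_emod_self_left, Int.emod_eq_of_lt hm'.le (by omega)]

lemma Nat.forall_lt_of_mod_succ {N : ℕ} {p : ℕ → Prop} (hstep : ∀ u < N, p u → p ((u + 1) % N))
    {u₀ : ℕ} (hu₀ : u₀ < N) (h₀ : p u₀) : ∀ u < N, p u := by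
  have key : ∀ k, p ((u₀ + k) % N) := by
    intro k
    induction k with
    | zero => rwa [add_zero, Nat.mod_eq_of_lt hu₀]
    | succ k ih =>
      have := hstep _ (Nat.mod_lt _ (by omega)) ih
      rw [Nat.mod_add_mod] at this
      rwa [← add_assoc]
  intro u hu
  have := key (u + N - u₀)
  rwa [show u₀ + (u + N - u₀) = u + N by omega, Nat.add_mod_right, Nat.mod_eq_of_lt hu] at this

lemma Finset.sum_range_two_mul_eq {M : Type*} [AddCommMonoid M] (f : ℕ → M) (n : ℕ) :
    ∑ b ∈ range (2 * n), f b = ∑ j ∈ range n, (f (2 * j) + f (2 * j + 1)) := by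
  induction n with
  | zero => simp
  | succ m ih => rw [show 2 * (m + 1) = 2 * m + 1 + 1 by ring, sum_range_succ, sum_range_succ,
      ih, sum_range_succ, add_assoc]

lemma div_sub_le_div_of_le_two_mul {d Y c δ : ℝ} (hc : 0 < c) (hcY : c ≤ Y) (hYc : Y ≤ c + δ)
    (hd : d ≤ 2 * Y) : d / c - 2 * δ / c ≤ d / Y := by
  rw [← sub_div, div_le_div_iff₀ hc (hc.trans_le hcY)]
  rcases le_or_gt d 0 with h | h <;> nlinarith

lemma neg_div_le_sum_div {ι : Type*} {T : Finset ι} {d Y : ι → ℝ} {c δ ε : ℝ} (hc : 0 < c)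
    (hY : ∀ j ∈ T, c ≤ Y j ∧ Y j ≤ c + δ) (hd : ∀ j ∈ T, d j ≤ 2 * Y j)
    (hsum : -ε ≤ ∑ j ∈ T, d j) : -(ε + 2 * #T * δ) / c ≤ ∑ j ∈ T, d j / Y j :=
  calc -(ε + 2 * #T * δ) / c = -ε / c - #T * (2 * δ / c) := by ring
    _ ≤ (∑ j ∈ T, d j) / c - #T * (2 * δ / c) := by gcongr
    _ = ∑ j ∈ T, (d j / c - 2 * δ / c) := by rw [sum_sub_distrib, sum_div, sum_const, nsmul_eq_mul]
    _ ≤ ∑ j ∈ T, d j / Y j := sum_le_sum fun j hj =>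
        div_sub_le_div_of_le_two_mul hc (hY j hj).1 (hY j hj).2 (hd j hj)

lemma div_le_of_one_le_mul {M V ε t : ℝ} (hM : 0 < M) (hV : 1 ≤ M * V) (hε0 : 0 ≤ ε)
    (hε : ε < 1 / (6 * 8 * M)) (ht : t ≤ 2) :
    (ε + 2 * t * (ε / 8)) / ((V - ε) / 8) ≤ 3 * 8 * M * ε := by
  rw [lt_div_iff₀ (by positivity)] at hε
  have hVε : 0 < V - ε := by nlinarith
  rw [div_le_iff₀ (by positivity)]
  nlinarith [mul_le_mul_of_nonneg_left hV hε0, mul_le_mul_of_nonneg_left ht hε0]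

lemma mem_Icc_of_mem_zero_one_two {a : ℝ} (h : a ∈ ({0, 1, 2} : Set ℝ)) : 0 ≤ a ∧ a ≤ 2 := by
  rcases h with rfl | rfl | rfl <;> norm_num

section ActionIndex

variable {n : ℕ}

lemma actionIndex_lt {a : ℕ} (ha : a < 3 * n + 2) : actionIndex n a < 2 * n + 2 := by
  unfold actionIndex; split_ifs <;> omega

lemma lt_two_mul_iff_actionIndex_lt {a : ℕ} :
    a < 2 * n ↔ actionIndex n a < n := by
  unfold actionIndex; split_ifs <;> omega

lemma sum_ite_actionIndex_eq (f : ℕ → ℝ) {v : ℕ} (hv : v < 2 * n + 2) :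
    ∑ b ∈ range (3 * n + 2), (if actionIndex n b = v then f b else 0) = aggProb n f v := by
  rw [← Finset.sum_filter, aggProb]
  split_ifs with h
  · have : (range (3 * n + 2)).filter (actionIndex n · = v) = {2 * v, 2 * v + 1} := by
      ext b; rw [Finset.mem_filter]; simp only [mem_range, mem_insert, mem_singleton, actionIndex]
      split_ifs <;> omega
    rw [this, sum_pair (by omega)]
  · have : (range (3 * n + 2)).filter (actionIndex n · = v) = {n + v} := by
      ext b; rw [Finset.mem_filter]; simp only [mem_range, mem_singleton, actionIndex]
      split_ifs <;> omega
    rw [this, sum_singleton]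

lemma sum_aggProb (f : ℕ → ℝ) :
    ∑ v ∈ range (2 * n + 2), aggProb n f v = ∑ a ∈ range (3 * n + 2), f a := by
  rw [← sum_congr rfl fun v hv => sum_ite_actionIndex_eq f (mem_range.mp hv), sum_comm]
  refine sum_congr rfl fun a ha => ?_
  rw [sum_ite_eq, if_pos (mem_range.mpr (actionIndex_lt (mem_range.mp ha)))]

lemma aggProb_nonneg {f : ℕ → ℝ} (hf : ∀ a, 0 ≤ f a) (v : ℕ) : 0 ≤ aggProb n f v := by
  unfold aggProb; split_ifs
  exacts [add_nonneg (hf _) (hf _), hf _]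

end ActionIndex

noncomputable def polySupport (n : ℕ) (P : ℕ → ℕ → ℕ → ℕ → ℝ) (i : ℕ) : Finset ℕ :=
  (range n).filter fun j => ∃ s < 2, ∃ t < 2, P i j s t ≠ 0

structure IsSparsePayoff (n : ℕ) (P : ℕ → ℕ → ℕ → ℕ → ℝ) : Prop where
  mem_Icc : ∀ i < n, ∀ j < n, ∀ s < 2, ∀ t < 2, 0 ≤ P i j s t ∧ P i j s t ≤ 2
  card_polySupport_le : ∀ i < n, #(polySupport n P i) ≤ 2

lemma polySupport_subset_range {n : ℕ} {P : ℕ → ℕ → ℕ → ℕ → ℝ} {i : ℕ} :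
    polySupport n P i ⊆ range n := fun j hj => by
  simp only [polySupport, Finset.mem_filter] at hj
  exact hj.1

lemma eq_zero_of_not_mem_polySupport {n : ℕ} {P : ℕ → ℕ → ℕ → ℕ → ℝ} {i j s t : ℕ}
    (hj : j < n) (hjT : j ∉ polySupport n P i) (hs : s < 2) (ht : t < 2) : P i j s t = 0 := by
  simp only [polySupport, Finset.mem_filter, mem_range, not_and, not_exists] at hjT
  by_contra h
  exact hjT hj s hs t ht h

lemma RestrictedPolymatrix.isSparsePayoff_Ap {n : ℕ} (G : RestrictedPolymatrix n) :
    IsSparsePayoff n G.Ap where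
  mem_Icc i hi j hj s hs t ht := mem_Icc_of_mem_zero_one_two (G.vals_Ap i hi j hj s hs t ht)
  card_polySupport_le := G.indeg_left

lemma RestrictedPolymatrix.isSparsePayoff_Bp {n : ℕ} (G : RestrictedPolymatrix n) :
    IsSparsePayoff n (fun j i t s => G.Bp i j s t) where
  mem_Icc j hj i hi t ht s hs := mem_Icc_of_mem_zero_one_two (G.vals_Bp i hi j hj s hs t ht)
  card_polySupport_le j hj := by
    refine (card_le_card fun i hi => ?_).trans (G.indeg_right j hj)
    simp only [polySupport, Finset.mem_filter] at hi ⊢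
    obtain ⟨hi, t, ht, s, hs, h⟩ := hi
    exact ⟨hi, s, hs, t, ht, h⟩

/-- The common shape of `consA` and of the transpose of `consB` (see `consA_eq`, `consB_eq`). -/
noncomputable def cycMatrix (n r : ℕ) (P : ℕ → ℕ → ℕ → ℕ → ℝ) : ℕ → ℕ → ℝ := fun a b =>
  if a < 2*n ∧ b < 2*n then P (a/2) (b/2) (a % 2) (b % 2)
  else if ((actionIndex n b : ℤ) - (actionIndex n a : ℤ)) % (2*n+2) = (r : ℤ) then
    (if 2*n ≤ a ∧ b < 2*n then 8 else 1)
  else 0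

lemma consA_eq (n : ℕ) (G : RestrictedPolymatrix n) : consA n G = cycMatrix n (n + 1) G.Ap := by
  ext a b
  simp only [consA, cycMatrix, Nat.cast_add, Nat.cast_one]

lemma consB_eq {n : ℕ} (hn : 0 < n) (G : RestrictedPolymatrix n) (a b : ℕ) :
    consB n G a b = cycMatrix n n (fun j i t s => G.Bp i j s t) b a := by
  have hcond : ((actionIndex n b : ℤ) - actionIndex n a) % (2 * n + 2) = n + 2 ↔
      ((actionIndex n a : ℤ) - actionIndex n b) % (2 * n + 2) = n :=
    ⟨fun h => by simpa using Int.neg_emod_eq_of_emod_eq (by omega) (by omega) (by ring) h,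
     fun h => by simpa using Int.neg_emod_eq_of_emod_eq (by omega) (by omega) (by ring) h⟩
  simp only [consB, cycMatrix, hcond, and_comm]

noncomputable def primaryPayoff (n : ℕ) (P : ℕ → ℕ → ℕ → ℕ → ℝ) (y : ℕ → ℝ) (i s : ℕ) : ℝ :=
  ∑ j ∈ range n, (P i j s 0 * y (2 * j) + P i j s 1 * y (2 * j + 1))

noncomputable def cycPayoff (n r : ℕ) (P : ℕ → ℕ → ℕ → ℕ → ℝ) (y : ℕ → ℝ) (a : ℕ) : ℝ :=
  ∑ b ∈ range (3 * n + 2), cycMatrix n r P a b * y b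

section CycPayoff

variable {n r : ℕ} {P : ℕ → ℕ → ℕ → ℕ → ℝ} {y : ℕ → ℝ}

lemma cycMatrix_eq (hr : n ≤ r) (hr' : r ≤ n + 1) {a b : ℕ} (ha : a < 3 * n + 2)
    (hb : b < 3 * n + 2) :
    cycMatrix n r P a b = (if a < 2*n ∧ b < 2*n then P (a/2) (b/2) (a % 2) (b % 2) else 0) +
      if actionIndex n b = (actionIndex n a + r) % (2 * n + 2) then
        (if 2*n ≤ a ∧ b < 2*n then 8 else 1) else 0 := by
  have hcond := Int.emod_natCast_sub_eq_iff (actionIndex_lt ha) (actionIndex_lt hb)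
    (show r < 2 * n + 2 by omega)
  push_cast at hcond
  by_cases hab : a < 2 * n ∧ b < 2 * n
  · have hmod := (Nat.mod_eq_of_lt_two_mul (m := actionIndex n a + r) (N := 2 * n + 2)
      (by have := actionIndex_lt ha; omega)).1
    have hua := (lt_two_mul_iff_actionIndex_lt (n := n) (a := a)).mp hab.1
    have hub := (lt_two_mul_iff_actionIndex_lt (n := n) (a := b)).mp hab.2
    have hne : actionIndex n b ≠ (actionIndex n a + r) % (2 * n + 2) := by omega
    simp [cycMatrix, hab, hne]
  · simp only [cycMatrix, if_neg hab, hcond, zero_add]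

lemma cycPayoff_eq (hr : n ≤ r) (hr' : r ≤ n + 1) {a : ℕ} (ha : a < 3 * n + 2) :
    cycPayoff n r P y a = (if a < 2 * n then primaryPayoff n P y (a / 2) (a % 2) else 0) +
      (if 2 * n ≤ a ∧ (actionIndex n a + r) % (2 * n + 2) < n then 8 else 1) *
        aggProb n y ((actionIndex n a + r) % (2 * n + 2)) := by
  rw [cycPayoff, sum_congr rfl fun b hb => by rw [cycMatrix_eq hr hr' ha (mem_range.mp hb)]]
  simp only [add_mul, sum_add_distrib]
  congr 1
  · split_ifs with ha2
    · rw [← sum_range_add_sum_Ico _ (show 2 * n ≤ 3 * n + 2 by omega),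
        sum_eq_zero (s := Ico _ _) fun b hb => by simp [(mem_Ico.mp hb).1.not_gt],
        add_zero, sum_range_two_mul_eq, primaryPayoff]
      refine sum_congr rfl fun j hj => ?_
      have hj := mem_range.mp hj
      simp [ha2, show 2 * j < 2 * n by omega, show 2 * j + 1 < 2 * n by omega, Nat.add_div,
        Nat.add_mod]
    · exact sum_eq_zero fun b _ => by simp [ha2]
  · rw [← sum_ite_actionIndex_eq _ (Nat.mod_lt _ (by omega)), mul_sum]
    refine sum_congr rfl fun b _ => ?_
    split_ifs <;> simp_all [lt_two_mul_iff_actionIndex_lt]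

lemma cycPayoff_primary (hr : n ≤ r) (hr' : r ≤ n + 1) {i s : ℕ} (hi : i < n) (hs : s < 2) :
    cycPayoff n r P y (2 * i + s) = primaryPayoff n P y i s + aggProb n y (i + r) := by
  have hidx : actionIndex n (2 * i + s) = i := by unfold actionIndex; split_ifs <;> omega
  rw [cycPayoff_eq hr hr' (by omega), hidx, Nat.mod_eq_of_lt (show i + r < 2 * n + 2 by omega),
    if_pos (by omega), if_neg (by omega), one_mul, show (2 * i + s) / 2 = i by omega,
    show (2 * i + s) % 2 = s by omega]

lemma cycPayoff_secondary_partner (hr : n ≤ r) (hr' : r ≤ n + 1) {j : ℕ} (hj : j < n) :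
    cycPayoff n r P y (3 * n + 2 + j - r) = 8 * aggProb n y j := by
  have hidx : actionIndex n (3 * n + 2 + j - r) + r = j + (2 * n + 2) := by
    unfold actionIndex; split_ifs <;> omega
  rw [cycPayoff_eq hr hr' (by omega), hidx, Nat.add_mod_right,
    Nat.mod_eq_of_lt (show j < 2 * n + 2 by omega),
    if_neg (by omega), if_pos ⟨by omega, hj⟩, zero_add]

lemma exists_actionIndex_add_mod_eq (hr' : r ≤ n + 1) {k : ℕ} (hk : k < 2 * n + 2) :
    ∃ a < 3 * n + 2, (actionIndex n a + r) % (2 * n + 2) = k := by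
  obtain ⟨a, ha, h⟩ : ∃ a < 3 * n + 2,
      actionIndex n a + r = k ∨ actionIndex n a + r = k + (2 * n + 2) := by
    by_cases h : r ≤ k
    · by_cases h' : k - r < n
      · exact ⟨2 * (k - r), by omega, by left; unfold actionIndex; split_ifs <;> omega⟩
      · exact ⟨n + (k - r), by omega, by left; unfold actionIndex; split_ifs <;> omega⟩
    · exact ⟨3 * n + 2 + k - r, by omega, by right; unfold actionIndex; split_ifs <;> omega⟩
  refine ⟨a, ha, ?_⟩
  rcases h with h | h
  · rw [h, Nat.mod_eq_of_lt hk]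
  · rw [h, Nat.add_mod_right, Nat.mod_eq_of_lt hk]

end CycPayoff

def IsWellSupportedResponse (m : ℕ) (pay x : ℕ → ℝ) (ε : ℝ) : Prop :=
  ∀ a < m, 0 < x a → ∀ a' < m, pay a ≥ pay a' - ε

lemma nonempty_range_three_mul_add_two (n : ℕ) : (range (3 * n + 2)).Nonempty :=
  nonempty_range_iff.mpr (by omega)

noncomputable def cycMax (n r : ℕ) (P : ℕ → ℕ → ℕ → ℕ → ℝ) (y : ℕ → ℝ) : ℝ :=
  (range (3 * n + 2)).sup' (nonempty_range_three_mul_add_two n) (cycPayoff n r P y)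

section OneSided

variable {n r : ℕ} {P : ℕ → ℕ → ℕ → ℕ → ℝ} {x y : ℕ → ℝ} {ε : ℝ}

lemma cycPayoff_le_cycMax {a : ℕ} (ha : a < 3 * n + 2) : cycPayoff n r P y a ≤ cycMax n r P y :=
  le_sup' _ (mem_range.mpr ha)

lemma cycMax_sub_le_cycPayoff (hbr : IsWellSupportedResponse (3 * n + 2) (cycPayoff n r P y) x ε)
    {a : ℕ} (ha : a < 3 * n + 2) (hxa : 0 < x a) : cycMax n r P y - ε ≤ cycPayoff n r P y a := by
  obtain ⟨a', ha', hmax⟩ :=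
    exists_mem_eq_sup' (nonempty_range_three_mul_add_two n) (cycPayoff n r P y)
  rw [cycMax, hmax]
  linarith [hbr a ha hxa a' (mem_range.mp ha')]

lemma primaryPayoff_nonneg (hP : IsSparsePayoff n P) (hy0 : ∀ b, 0 ≤ y b) {i s : ℕ} (hi : i < n)
    (hs : s < 2) : 0 ≤ primaryPayoff n P y i s :=
  sum_nonneg fun j hj => add_nonneg
    (mul_nonneg (hP.mem_Icc i hi j (mem_range.mp hj) s hs 0 (by omega)).1 (hy0 _))
    (mul_nonneg (hP.mem_Icc i hi j (mem_range.mp hj) s hs 1 (by omega)).1 (hy0 _))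

lemma eight_mul_aggProb_le_cycMax (hr : n ≤ r) (hr' : r ≤ n + 1) {j : ℕ} (hj : j < n) :
    8 * aggProb n y j ≤ cycMax n r P y := by
  rw [← cycPayoff_secondary_partner (P := P) hr hr' hj]
  exact cycPayoff_le_cycMax (by omega)

lemma aggProb_le_cycMax (hr : n ≤ r) (hr' : r ≤ n + 1) (hP : IsSparsePayoff n P)
    (hy0 : ∀ b, 0 ≤ y b) {k : ℕ} (hk : k < 2 * n + 2) : aggProb n y k ≤ cycMax n r P y := by
  obtain ⟨a, ha, hak⟩ := exists_actionIndex_add_mod_eq hr' hk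
  refine le_trans ?_ (cycPayoff_le_cycMax ha)
  have hYk := aggProb_nonneg (n := n) hy0 k
  rw [cycPayoff_eq hr hr' ha, hak]
  have hprim : 0 ≤ if a < 2 * n then primaryPayoff n P y (a / 2) (a % 2) else 0 := by
    split_ifs with h
    exacts [primaryPayoff_nonneg hP hy0 (by omega) (Nat.mod_lt _ (by omega)), le_rfl]
  split_ifs at hprim ⊢ <;> linarith

lemma one_le_mul_cycMax (hr : n ≤ r) (hr' : r ≤ n + 1) (hP : IsSparsePayoff n P)
    (hy0 : ∀ b, 0 ≤ y b) (hy1 : ∑ b ∈ range (3 * n + 2), y b = 1) :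
    1 ≤ (2 * (n : ℝ) + 2) * cycMax n r P y := by
  calc (1 : ℝ) = ∑ k ∈ range (2 * n + 2), aggProb n y k := by rw [sum_aggProb, hy1]
    _ ≤ ∑ _k ∈ range (2 * n + 2), cycMax n r P y :=
        sum_le_sum fun k hk => aggProb_le_cycMax hr hr' hP hy0 (mem_range.mp hk)
    _ = (2 * (n : ℝ) + 2) * cycMax n r P y := by simp

lemma two_mul_lt_cycMax (hr : n ≤ r) (hr' : r ≤ n + 1) (hP : IsSparsePayoff n P)
    (hy0 : ∀ b, 0 ≤ y b) (hy1 : ∑ b ∈ range (3 * n + 2), y b = 1)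
    (hε : ε < 1 / (6 * 8 * (2 * (n : ℝ) + 2))) : 2 * ε < cycMax n r P y := by
  have hV := one_le_mul_cycMax hr hr' hP hy0 hy1
  rw [lt_div_iff₀ (by positivity)] at hε
  nlinarith

lemma cycMax_nonneg (hr : n ≤ r) (hr' : r ≤ n + 1) (hP : IsSparsePayoff n P)
    (hy0 : ∀ b, 0 ≤ y b) : 0 ≤ cycMax n r P y :=
  (aggProb_nonneg hy0 0).trans (aggProb_le_cycMax hr hr' hP hy0 (by omega))

lemma primaryPayoff_le_half_cycMax (hr : n ≤ r) (hr' : r ≤ n + 1) (hP : IsSparsePayoff n P)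
    (hy0 : ∀ b, 0 ≤ y b) {i s : ℕ} (hi : i < n) (hs : s < 2) :
    primaryPayoff n P y i s ≤ cycMax n r P y / 2 := by
  have hV0 := cycMax_nonneg hr hr' hP hy0
  calc primaryPayoff n P y i s
      = ∑ j ∈ polySupport n P i, (P i j s 0 * y (2 * j) + P i j s 1 * y (2 * j + 1)) := by
        refine (sum_subset polySupport_subset_range fun j hj hjT => ?_).symm
        rw [eq_zero_of_not_mem_polySupport (mem_range.mp hj) hjT hs zero_lt_two,
          eq_zero_of_not_mem_polySupport (mem_range.mp hj) hjT hs one_lt_two]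
        ring
    _ ≤ ∑ _j ∈ polySupport n P i, cycMax n r P y / 4 := sum_le_sum fun j hjT => by
        have hj := mem_range.mp (polySupport_subset_range hjT)
        have h₀ := hP.mem_Icc i hi j hj s hs 0 zero_lt_two
        have h₁ := hP.mem_Icc i hi j hj s hs 1 one_lt_two
        have h₈ := eight_mul_aggProb_le_cycMax (P := P) (y := y) hr hr' hj
        simp only [aggProb, if_pos hj] at h₈
        nlinarith [hy0 (2 * j), hy0 (2 * j + 1)]
    _ ≤ 2 * (cycMax n r P y / 4) := by
        rw [sum_const, nsmul_eq_mul]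
        gcongr
        exact_mod_cast hP.card_polySupport_le i hi
    _ = cycMax n r P y / 2 := by ring

lemma aggProb_eq_zero_of_partner (hr : n ≤ r) (hr' : r ≤ n + 1) (hP : IsSparsePayoff n P)
    (hx0 : ∀ a, 0 ≤ x a) (hy0 : ∀ b, 0 ≤ y b)
    (hbr : IsWellSupportedResponse (3 * n + 2) (cycPayoff n r P y) x ε)
    (hV : 2 * ε < cycMax n r P y) {u : ℕ} (hu : u < 2 * n + 2)
    (hY : aggProb n y ((u + r) % (2 * n + 2)) = 0) : aggProb n x u = 0 := by
  rw [← sum_ite_actionIndex_eq x hu]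
  refine sum_eq_zero fun a ha => ?_
  split_ifs with hau
  · have ha := mem_range.mp ha
    have hpay : cycPayoff n r P y a ≤ cycMax n r P y / 2 := by
      rw [cycPayoff_eq hr hr' ha, hau, hY, mul_zero, add_zero]
      split_ifs with h
      · exact primaryPayoff_le_half_cycMax hr hr' hP hy0 (by omega) (Nat.mod_lt _ (by omega))
      · linarith [cycMax_nonneg hr hr' hP hy0]
    by_contra hxa
    linarith [cycMax_sub_le_cycPayoff hbr ha (lt_of_le_of_ne (hx0 a) (Ne.symm hxa))]
  · rfl

lemma cycMax_sub_le_eight_mul_aggProb (hr : n ≤ r) (hr' : r ≤ n + 1)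
    (hbr : IsWellSupportedResponse (3 * n + 2) (cycPayoff n r P y) x ε) {j : ℕ} (hj : j < n)
    (hx : 0 < aggProb n x (2 * n + 2 + j - r)) : cycMax n r P y - ε ≤ 8 * aggProb n y j := by
  rw [aggProb, if_neg (by omega), show n + (2 * n + 2 + j - r) = 3 * n + 2 + j - r by omega] at hx
  rw [← cycPayoff_secondary_partner hr hr' hj]
  exact cycMax_sub_le_cycPayoff hbr (by omega) hx

lemma primaryPayoff_sub_le (hr : n ≤ r) (hr' : r ≤ n + 1)
    (hbr : IsWellSupportedResponse (3 * n + 2) (cycPayoff n r P y) x ε) {i s s' : ℕ}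
    (hi : i < n) (hs : s < 2) (hs' : s' < 2) (hx : 0 < x (2 * i + s)) :
    primaryPayoff n P y i s' - ε ≤ primaryPayoff n P y i s := by
  have h := hbr (2 * i + s) (by omega) hx (2 * i + s') (by omega)
  rw [cycPayoff_primary hr hr' hi hs, cycPayoff_primary hr hr' hi hs'] at h
  linarith

end OneSided

noncomputable def polyPayoff (n : ℕ) (P : ℕ → ℕ → ℕ → ℕ → ℝ) (q : ℕ → ℝ) (i s : ℕ) : ℝ :=
  ∑ j ∈ range n, ((1 - q j) * P i j s 0 + q j * P i j s 1)

noncomputable def condProb (y : ℕ → ℝ) (j : ℕ) : ℝ := y (2 * j + 1) / (y (2 * j) + y (2 * j + 1))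

def payoffGap (P : ℕ → ℕ → ℕ → ℕ → ℝ) (y : ℕ → ℝ) (i s s' j : ℕ) : ℝ :=
  (P i j s 0 - P i j s' 0) * y (2 * j) + (P i j s 1 - P i j s' 1) * y (2 * j + 1)

section Gap

variable {n : ℕ} {P : ℕ → ℕ → ℕ → ℕ → ℝ} {y : ℕ → ℝ}

lemma primaryPayoff_sub_primaryPayoff (i s s' : ℕ) :
    primaryPayoff n P y i s - primaryPayoff n P y i s' = ∑ j ∈ range n, payoffGap P y i s s' j := by
  rw [primaryPayoff, primaryPayoff, ← sum_sub_distrib]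
  exact sum_congr rfl fun j _ => by rw [payoffGap]; ring

lemma polyPayoff_sub_polyPayoff (hY : ∀ j < n, 0 < aggProb n y j) (i s s' : ℕ) :
    polyPayoff n P (condProb y) i s - polyPayoff n P (condProb y) i s' =
      ∑ j ∈ range n, payoffGap P y i s s' j / aggProb n y j := by
  rw [polyPayoff, polyPayoff, ← sum_sub_distrib]
  refine sum_congr rfl fun j hj => ?_
  have hYj := hY j (mem_range.mp hj)
  rw [aggProb, if_pos (mem_range.mp hj)] at hYj ⊢
  rw [condProb, payoffGap]
  field_simp
  ring

lemma payoffGap_le (hP : IsSparsePayoff n P) (hy0 : ∀ b, 0 ≤ y b) {i s s' j : ℕ} (hi : i < n)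
    (hs : s < 2) (hs' : s' < 2) (hj : j < n) : payoffGap P y i s s' j ≤ 2 * aggProb n y j := by
  have h₀ := hP.mem_Icc i hi j hj s hs 0 zero_lt_two
  have h₁ := hP.mem_Icc i hi j hj s hs 1 one_lt_two
  have h₀' := hP.mem_Icc i hi j hj s' hs' 0 zero_lt_two
  have h₁' := hP.mem_Icc i hi j hj s' hs' 1 one_lt_two
  rw [payoffGap, aggProb, if_pos hj]
  nlinarith [hy0 (2 * j), hy0 (2 * j + 1)]

lemma payoffGap_eq_zero {i s s' j : ℕ} (hs : s < 2) (hs' : s' < 2) (hj : j < n)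
    (hjT : j ∉ polySupport n P i) : payoffGap P y i s s' j = 0 := by
  simp only [payoffGap, eq_zero_of_not_mem_polySupport hj hjT hs zero_lt_two,
    eq_zero_of_not_mem_polySupport hj hjT hs one_lt_two,
    eq_zero_of_not_mem_polySupport hj hjT hs' zero_lt_two,
    eq_zero_of_not_mem_polySupport hj hjT hs' one_lt_two, sub_self, zero_mul, add_zero]

end Gap

lemma polyPayoff_condProb_ge {n r : ℕ} {P : ℕ → ℕ → ℕ → ℕ → ℝ} {x y : ℕ → ℝ} {ε : ℝ}
    (hr : n ≤ r) (hr' : r ≤ n + 1) (hP : IsSparsePayoff n P) (hy0 : ∀ b, 0 ≤ y b)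
    (hy1 : ∑ b ∈ range (3 * n + 2), y b = 1)
    (hbr : IsWellSupportedResponse (3 * n + 2) (cycPayoff n r P y) x ε)
    (hX : ∀ u < 2 * n + 2, 0 < aggProb n x u)
    (hε0 : 0 ≤ ε) (hε : ε < 1 / (6 * 8 * (2 * (n : ℝ) + 2)))
    {i s s' : ℕ} (hi : i < n) (hs : s < 2) (hs' : s' < 2) (hx : 0 < x (2 * i + s)) :
    polyPayoff n P (condProb y) i s ≥
      polyPayoff n P (condProb y) i s' - 3 * 8 * (2 * (n : ℝ) + 2) * ε := by
  set c := (cycMax n r P y - ε) / 8 with hc_def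
  have hc : 0 < c := by linarith [two_mul_lt_cycMax hr hr' hP hy0 hy1 hε]
  have hY : ∀ j < n, c ≤ aggProb n y j ∧ aggProb n y j ≤ c + ε / 8 := fun j hj =>
    ⟨by linarith [cycMax_sub_le_eight_mul_aggProb hr hr' hbr hj (hX _ (by omega))],
     by linarith [eight_mul_aggProb_le_cycMax (P := P) (y := y) hr hr' hj]⟩
  have hgap : -ε ≤ ∑ j ∈ polySupport n P i, payoffGap P y i s s' j := by
    rw [sum_subset polySupport_subset_range fun j hj hjT =>
      payoffGap_eq_zero hs hs' (mem_range.mp hj) hjT, ← primaryPayoff_sub_primaryPayoff]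
    linarith [primaryPayoff_sub_le hr hr' hbr hi hs hs' hx]
  suffices h : -(3 * 8 * (2 * (n : ℝ) + 2) * ε) ≤
      ∑ j ∈ polySupport n P i, payoffGap P y i s s' j / aggProb n y j by
    rw [sum_subset polySupport_subset_range fun j hj hjT => by
        rw [payoffGap_eq_zero hs hs' (mem_range.mp hj) hjT, zero_div],
      ← polyPayoff_sub_polyPayoff fun j hj => hc.trans_le (hY j hj).1] at h
    linarith
  calc -(3 * 8 * (2 * (n : ℝ) + 2) * ε)
      ≤ -(ε + 2 * #(polySupport n P i) * (ε / 8)) / c := by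
        rw [neg_div, neg_le_neg_iff]
        exact div_le_of_one_le_mul (by positivity) (one_le_mul_cycMax hr hr' hP hy0 hy1) hε0 hε
          (by exact_mod_cast hP.card_polySupport_le i hi)
    _ ≤ _ := neg_div_le_sum_div hc (fun j hj => hY j (mem_range.mp (polySupport_subset_range hj)))
        (fun j hj => payoffGap_le hP hy0 hi hs hs' (mem_range.mp (polySupport_subset_range hj)))
        hgap

lemma condProb_mem_Icc {x : ℕ → ℝ} (hx0 : ∀ a, 0 ≤ x a) {i : ℕ}
    (hX : 0 < x (2 * i) + x (2 * i + 1)) :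
    0 ≤ condProb x i ∧ condProb x i ≤ 1 :=
  ⟨div_nonneg (hx0 _) hX.le, (div_le_one hX).mpr (by linarith [hx0 (2 * i)])⟩

lemma pos_of_condProb_pos {x : ℕ → ℝ} {i : ℕ} (hX : 0 < x (2 * i) + x (2 * i + 1))
    (h : 0 < condProb x i) : 0 < x (2 * i + 1) :=
  (div_pos_iff_of_pos_right hX).mp h

lemma pos_of_condProb_lt_one {x : ℕ → ℝ} {i : ℕ} (hX : 0 < x (2 * i) + x (2 * i + 1))
    (h : condProb x i < 1) : 0 < x (2 * i) := by
  rw [condProb, div_lt_one hX] at h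
  linarith

lemma polyIsWSNE_half {n r : ℕ} {P : ℕ → ℕ → ℕ → ℕ → ℝ} {x y : ℕ → ℝ} {ε : ℝ}
    (hr : n ≤ r) (hr' : r ≤ n + 1) (hP : IsSparsePayoff n P) (hx0 : ∀ a, 0 ≤ x a)
    (hy0 : ∀ b, 0 ≤ y b) (hy1 : ∑ b ∈ range (3 * n + 2), y b = 1)
    (hbr : IsWellSupportedResponse (3 * n + 2) (cycPayoff n r P y) x ε)
    (hX : ∀ u < 2 * n + 2, 0 < aggProb n x u)
    (hε0 : 0 ≤ ε) (hε : ε < 1 / (6 * 8 * (2 * (n : ℝ) + 2))) :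
    (∀ i < n, 0 ≤ condProb x i ∧ condProb x i ≤ 1) ∧
    ∀ i < n,
      (0 < condProb x i → polyPayoff n P (condProb y) i 1 ≥
        polyPayoff n P (condProb y) i 0 - 3 * 8 * (2 * (n : ℝ) + 2) * ε) ∧
      (condProb x i < 1 → polyPayoff n P (condProb y) i 0 ≥
        polyPayoff n P (condProb y) i 1 - 3 * 8 * (2 * (n : ℝ) + 2) * ε) := by
  have hXi : ∀ i < n, 0 < x (2 * i) + x (2 * i + 1) := fun i hi => by
    simpa only [aggProb, if_pos hi] using hX i (by omega)
  refine ⟨fun i hi => condProb_mem_Icc hx0 (hXi i hi), fun i hi => ⟨fun h => ?_, fun h => ?_⟩⟩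
  · exact polyPayoff_condProb_ge hr hr' hP hy0 hy1 hbr hX hε0 hε hi one_lt_two zero_lt_two
      (pos_of_condProb_pos (hXi i hi) h)
  · exact polyPayoff_condProb_ge hr hr' hP hy0 hy1 hbr hX hε0 hε hi zero_lt_two one_lt_two
      (by simpa using pos_of_condProb_lt_one (hXi i hi) h)

lemma aggProb_pos {n : ℕ} {P Q : ℕ → ℕ → ℕ → ℕ → ℝ} {x y : ℕ → ℝ} {ε : ℝ}
    (hP : IsSparsePayoff n P) (hQ : IsSparsePayoff n Q) (hx0 : ∀ a, 0 ≤ x a)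
    (hy0 : ∀ b, 0 ≤ y b) (hx1 : ∑ a ∈ range (3 * n + 2), x a = 1)
    (hy1 : ∑ b ∈ range (3 * n + 2), y b = 1)
    (hbrx : IsWellSupportedResponse (3 * n + 2) (cycPayoff n (n + 1) P y) x ε)
    (hbry : IsWellSupportedResponse (3 * n + 2) (cycPayoff n n Q x) y ε)
    (hε : ε < 1 / (6 * 8 * (2 * (n : ℝ) + 2))) :
    (∀ u < 2 * n + 2, 0 < aggProb n x u) ∧ ∀ v < 2 * n + 2, 0 < aggProb n y v := by
  have hzx : ∀ u < 2 * n + 2, aggProb n y ((u + (n + 1)) % (2 * n + 2)) = 0 →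
      aggProb n x u = 0 := fun u hu =>
    aggProb_eq_zero_of_partner n.le_succ le_rfl hP hx0 hy0 hbrx
      (two_mul_lt_cycMax n.le_succ le_rfl hP hy0 hy1 hε) hu
  have hzy : ∀ v < 2 * n + 2, aggProb n x ((v + n) % (2 * n + 2)) = 0 → aggProb n y v = 0 :=
    fun v hv => aggProb_eq_zero_of_partner le_rfl n.le_succ hQ hy0 hx0 hbry
      (two_mul_lt_cycMax le_rfl n.le_succ hQ hx0 hx1 hε) hv
  have hX : ∀ u < 2 * n + 2, 0 < aggProb n x u := by
    -- row index `u` and row index `u + 1` share the partner column index `u + n + 2`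
    by_contra! h
    obtain ⟨u₀, hu₀, h₀⟩ := h
    have hzero := Nat.forall_lt_of_mod_succ (p := fun u => aggProb n x u = 0)
      (fun u hu hXu => hzx _ (Nat.mod_lt _ (by omega)) (hzy _ (Nat.mod_lt _ (by omega)) (by
        rwa [Nat.mod_add_mod, add_assoc, Nat.mod_add_mod,
          show u + 1 + (n + 1 + n) = u + (2 * n + 2) by ring,
          Nat.add_mod_right, Nat.mod_eq_of_lt hu])))
      hu₀ (le_antisymm h₀ (aggProb_nonneg hx0 _))
    have hsum := sum_aggProb (n := n) x
    rw [hx1, sum_eq_zero fun u hu => hzero u (mem_range.mp hu)] at hsum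
    norm_num at hsum
  refine ⟨hX, fun v hv => (aggProb_nonneg hy0 v).lt_of_ne fun h => ?_⟩
  refine (hX _ (Nat.mod_lt (v + n + 1) (by omega))).ne' (hzx _ (Nat.mod_lt _ (by omega)) ?_)
  rwa [Nat.mod_add_mod, show v + n + 1 + (n + 1) = v + (2 * n + 2) by ring, Nat.add_mod_right,
    Nat.mod_eq_of_lt hv, eq_comm]

/-- From an `ε`-WSNE of the constructed bimatrix game (with `K = 8`, `N = 2n+2` and
`0 ≤ ε < 1/(6·K·N)`) the renormalized primary-action probabilities form a
`(3·K·N·ε)`-WSNE of the restricted polymatrix game `G` (and the denominators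
`x_{i0} + x_{i1}` and `y_{j0} + y_{j1}` are positive). -/
theorem stmt2 (n : ℕ) (G : RestrictedPolymatrix n) (ε : ℝ) (x y : ℕ → ℝ)
    (hε0 : 0 ≤ ε) (hε : ε < 1 / (6 * 8 * (2 * (n:ℝ) + 2)))
    (hwsne : IsWSNE (3*n+2) (3*n+2) (consA n G) (consB n G) x y ε) :
    (∀ i < n, 0 < x (2*i) + x (2*i+1)) ∧
    (∀ j < n, 0 < y (2*j) + y (2*j+1)) ∧
    PolyIsWSNE n G
      (fun i => x (2*i+1) / (x (2*i) + x (2*i+1)))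
      (fun j => y (2*j+1) / (y (2*j) + y (2*j+1)))
      (3 * 8 * (2 * (n:ℝ) + 2) * ε) := by
  rcases Nat.eq_zero_or_pos n with rfl | hn
  · simp [PolyIsWSNE]
  obtain ⟨hx0, -, hx1, hy0, -, hy1, hrow, hcol⟩ := hwsne
  have hbrx : IsWellSupportedResponse (3 * n + 2) (cycPayoff n (n + 1) G.Ap y) x ε := by
    rw [consA_eq] at hrow
    exact hrow
  have hbry : IsWellSupportedResponse (3 * n + 2)
      (cycPayoff n n (fun j i t s => G.Bp i j s t) x) y ε := by
    simp only [consB_eq hn, mul_comm (x _)] at hcol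
    exact hcol
  obtain ⟨hX, hY⟩ :=
    aggProb_pos G.isSparsePayoff_Ap G.isSparsePayoff_Bp hx0 hy0 hx1 hy1 hbrx hbry hε
  obtain ⟨hp, hleft⟩ := polyIsWSNE_half n.le_succ le_rfl G.isSparsePayoff_Ap hx0 hy0 hy1 hbrx hX
    hε0 hε
  obtain ⟨hq, hright⟩ := polyIsWSNE_half le_rfl n.le_succ G.isSparsePayoff_Bp hy0 hx0 hx1 hbry hY
    hε0 hε
  exact ⟨fun i hi => by simpa only [aggProb, if_pos hi] using hX i (by omega),
    fun j hj => by simpa only [aggProb, if_pos hj] using hY j (by omega), hp, hq, hleft, hright⟩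
end

section
/- For every 0 ≤ ε < 1/2, every q ∈ [0,1], and all p_v, p_w ∈ [0,1] satisfying their respective ε-well-supported conditions of the PURIFY gadget: if q = 0 then p_v = 0 and p_w = 0; if q = 1 then p_v = 1 and p_w = 1; if q ≤ 1/2 then p_w = 0; and if q ≥ 1/2 then p_v = 1. In particular, at least one of p_v, p_w lies in {0,1}. -/
/-!
An `ε`-well-supported player whose one action beats the other by more than `ε` must play the
better action purely. For `ε < 1/2`, action `0` of `w` wins by `2 - 3q ≥ 1/2` when `q ≤ 1/2`,
and action `1` of `v` wins by `3q - 1 ≥ 1/2` when `q ≥ 1/2`; at `q = 0` and `q = 1` the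
remaining player faces a gap of `1`.
-/

lemma prob_eq_zero_of_payoff_gap {p u₀ u₁ ε : ℝ} (hp : 0 ≤ p)
    (hsupp : 0 < p → u₁ ≥ u₀ - ε) (hgap : u₁ < u₀ - ε) : p = 0 :=
  le_antisymm (not_lt.mp fun hpos => (hsupp hpos).not_gt hgap) hp

lemma prob_eq_one_of_payoff_gap {p u₀ u₁ ε : ℝ} (hp : p ≤ 1)
    (hsupp : p < 1 → u₀ ≥ u₁ - ε) (hgap : u₀ < u₁ - ε) : p = 1 :=
  le_antisymm hp (not_lt.mp fun hlt => (hsupp hlt).not_gt hgap)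

theorem stmt6_general (ε q pv pw : ℝ) (hε1 : ε < 1/2)
    (hpv : pv ∈ Set.Icc (0:ℝ) 1) (hpw : pw ∈ Set.Icc (0:ℝ) 1)
    (hv1 : 0 < pv → 2*q ≥ (1 - q) - ε) (hv2 : pv < 1 → 1 - q ≥ 2*q - ε)
    (hw1 : 0 < pw → q ≥ 2*(1 - q) - ε) (hw2 : pw < 1 → 2*(1 - q) ≥ q - ε) :
    (q = 0 → pv = 0 ∧ pw = 0) ∧ (q = 1 → pv = 1 ∧ pw = 1) ∧
    (q ≤ 1/2 → pw = 0) ∧ (1/2 ≤ q → pv = 1) ∧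
    (pv = 0 ∨ pv = 1 ∨ pw = 0 ∨ pw = 1) := by
  have hpw_zero : q ≤ 1/2 → pw = 0 := fun hq =>
    prob_eq_zero_of_payoff_gap hpw.1 hw1 (by linarith)
  have hpv_one : 1/2 ≤ q → pv = 1 := fun hq =>
    prob_eq_one_of_payoff_gap hpv.2 hv2 (by linarith)
  refine ⟨fun hq =>
      ⟨prob_eq_zero_of_payoff_gap hpv.1 hv1 (by linarith), hpw_zero (by linarith)⟩,
    fun hq => ⟨hpv_one (by linarith), prob_eq_one_of_payoff_gap hpw.2 hw2 (by linarith)⟩,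
    hpw_zero, hpv_one, ?_⟩
  rcases le_total q (1/2) with hq | hq
  · exact Or.inr (Or.inr (Or.inl (hpw_zero hq)))
  · exact Or.inr (Or.inl (hpv_one hq))

/-- PURIFY gadget: player `v`'s expected payoff is `1 - q` for action `0` and `2q`
for action `1`; player `w`'s expected payoff is `2(1-q)` for action `0` and `q` for
action `1`, where the opponent plays action `1` with probability `q`.  If
`p_v, p_w ∈ [0,1]` satisfy their respective `ε`-well-supported conditions for
`0 ≤ ε < 1/2`, then: `q = 0` forces `p_v = p_w = 0`; `q = 1` forces
`p_v = p_w = 1`; `q ≤ 1/2` forces `p_w = 0`; `q ≥ 1/2` forces `p_v = 1`; in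
particular at least one of `p_v, p_w` lies in `{0,1}`. -/
theorem stmt6 (ε q pv pw : ℝ) (hε0 : 0 ≤ ε) (hε1 : ε < 1/2)
    (hq : q ∈ Set.Icc (0:ℝ) 1) (hpv : pv ∈ Set.Icc (0:ℝ) 1) (hpw : pw ∈ Set.Icc (0:ℝ) 1)
    (hv1 : 0 < pv → 2*q ≥ (1 - q) - ε) (hv2 : pv < 1 → 1 - q ≥ 2*q - ε)
    (hw1 : 0 < pw → q ≥ 2*(1 - q) - ε) (hw2 : pw < 1 → 2*(1 - q) ≥ q - ε) :
    (q = 0 → pv = 0 ∧ pw = 0) ∧ (q = 1 → pv = 1 ∧ pw = 1) ∧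
    (q ≤ 1/2 → pw = 0) ∧ (1/2 ≤ q → pv = 1) ∧
    (pv = 0 ∨ pv = 1 ∨ pw = 0 ∨ pw = 1) :=
  stmt6_general ε q pv pw hε1 hpv hpw hv1 hv2 hw1 hw2
end

section
/- Let (A,B) and (A′,B′) be as in the type-one single column simulation with 4 ≤ K ≤ 8, let 0 ≤ ε < 1/(240·n²), and let (x*,y*) be an ε-WSNE of (A′,B′). Then the renormalizations defining the translated profile (x,y) are valid (the vectors x′ and y′ have positive sums), and (x,y) is a (3950·n²·ε)-WSNE of (A,B) (3950·n²·ε is an explicit form of the paper's O(n²·ε) bound). -/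
open Finset
open scoped Classical

/-- Input assumptions of the type-one single column simulation: `(A,B)` has at most
`n` rows and columns (`nr` rows, `nc` columns), all entries in `[0,K]`, every row
and column of `A` and `B` has an entry `≥ 1`, the columns of `A` containing `K` are
exactly the columns `j < k`, each such column contains exactly one `K`, its other
non-zero entries lie in `{1,2}` and are either at most two values from `{1,2}` or
at most three `1`s. -/
def Scs1Input (n nr nc k : ℕ) (K : ℝ) (A B : ℕ → ℕ → ℝ) : Prop :=
  nr ≤ n ∧ nc ≤ n ∧ k ≤ nc ∧
  (∀ i < nr, ∀ j < nc, 0 ≤ A i j ∧ A i j ≤ K) ∧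
  (∀ i < nr, ∀ j < nc, 0 ≤ B i j ∧ B i j ≤ K) ∧
  (∀ i < nr, ∃ j < nc, 1 ≤ A i j) ∧ (∀ j < nc, ∃ i < nr, 1 ≤ A i j) ∧
  (∀ i < nr, ∃ j < nc, 1 ≤ B i j) ∧ (∀ j < nc, ∃ i < nr, 1 ≤ B i j) ∧
  (∀ j < k,
    ((range nr).filter fun i => A i j = K).card = 1 ∧
    (∀ i < nr, A i j = 0 ∨ A i j = 1 ∨ A i j = 2 ∨ A i j = K) ∧
    (((range nr).filter fun i => A i j = 1 ∨ A i j = 2).card ≤ 2 ∨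
      (((range nr).filter fun i => A i j = 1).card ≤ 3 ∧ ∀ i < nr, A i j ≠ 2))) ∧
  (∀ j, k ≤ j → j < nc → ∀ i < nr, A i j ≠ K)

/-- The row player's payoff matrix `A'` of the type-one single column simulation.
It has `2k + nr` rows and `2k + nc` columns.  For each `j < k`: the block
`(rbʲ, cb₁ʲ) = ({2j,2j+1}, {3j,3j+1})` equals `S = [[2,0],[0,1]]`, the block
`(rbʲ, cb₂ʲ) = ({2j,2j+1}, {3j+2})` is all ones, and the block `(rb_e, cb₁ʲ)`
equals `encode(A_j)` (each `1` of column `A_j` kept as a `1` in the first column,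
each `2` replaced by a `1` in the second column, the `K` replaced by `K/2` in the
second column).  Columns `c ≥ 3k` restricted to `rb_e` equal the columns
`A_{k}, …, A_{nc-1}`; all other entries are `0`. -/
noncomputable def scs1A (k : ℕ) (K : ℝ) (A : ℕ → ℕ → ℝ) : ℕ → ℕ → ℝ := fun r c =>
  if r < 2*k then
    if c = 3*(r/2) then (if r % 2 = 0 then 2 else 0)
    else if c = 3*(r/2) + 1 then (if r % 2 = 0 then 0 else 1)
    else if c = 3*(r/2) + 2 then 1
    else 0
  else
    if c < 3*k then
      (if c % 3 = 0 then (if A (r - 2*k) (c/3) = 1 then 1 else 0)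
       else if c % 3 = 1 then
         (if A (r - 2*k) (c/3) = K then K/2
          else if A (r - 2*k) (c/3) = 2 then 1 else 0)
       else 0)
    else A (r - 2*k) (c - 2*k)

/-- The column player's payoff matrix `B'` of the type-one single column
simulation: for `j < k` the block `(rbʲ, cb₁ʲ)` equals `T = [[0,1],[1,0]]` and the
block `(rb_e, cb₂ʲ)` equals column `B_j`; columns `c ≥ 3k` restricted to `rb_e`
equal the columns `B_k, …, B_{nc-1}`; all other entries are `0`. -/
noncomputable def scs1B (k : ℕ) (B : ℕ → ℕ → ℝ) : ℕ → ℕ → ℝ := fun r c =>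
  if r < 2*k then
    if c = 3*(r/2) then (if r % 2 = 0 then 0 else 1)
    else if c = 3*(r/2) + 1 then (if r % 2 = 0 then 1 else 0)
    else 0
  else
    if c < 3*k then (if c % 3 = 2 then B (r - 2*k) (c/3) else 0)
    else B (r - 2*k) (c - 2*k)

/-- The (un-normalized) translated column strategy `y'`: for `j < k`,
`y'_j = y*_{3j}` if `P(cb₁ʲ) ≥ 11ε` and `0` otherwise; for `j ≥ k`,
`y'_j = y*_{3k + (j-k)}`. -/
noncomputable def scs1Y (k : ℕ) (ε : ℝ) (ystar : ℕ → ℝ) : ℕ → ℝ := fun j =>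
  if j < k then (if 11 * ε ≤ ystar (3*j) + ystar (3*j+1) then ystar (3*j) else 0)
  else ystar (2*k + j)

/-!
Write `a_j, b_j, c_j` for the weights of `y*` on the columns `3j, 3j+1, 3j+2` of gadget `j < k`.
Every row of `B'` has an entry `≥ 1`, so a played column of `B'` pays at least
`1/(3n) - ε > 0`; hence playing `a_j` (resp. `b_j`) forces the gadget row `2j+1` (resp. `2j`) to
be played, and comparing their payoffs `b_j + c_j` and `2a_j + c_j` gives `|b_j - 2a_j| ≤ ε`.
Consequently the payoff of the encoding row `i` is within `44nε` of the payoff of row `i` of `A`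
against `y'`, which transfers the row conditions. A gadget above the threshold with `a_j > 0`
also has `c_j > 0`, because the `K` of column `j` lets an encoding row compete with row `2j+1`;
so every column in the support of `y'` is simulated by a played column of `B'`, which transfers
the column conditions. Renormalizing divides the slack by `∑ x' ≥ 1/(33n)` and
`∑ y' ≥ 1/(15n)`.
-/

def rowPayoff (nc : ℕ) (A : ℕ → ℕ → ℝ) (y : ℕ → ℝ) (i : ℕ) : ℝ :=
  ∑ j ∈ range nc, A i j * y j

def colPayoff (nr : ℕ) (B : ℕ → ℕ → ℝ) (x : ℕ → ℝ) (j : ℕ) : ℝ :=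
  ∑ i ∈ range nr, x i * B i j

namespace IsWSNE

variable {nr nc : ℕ} {A B : ℕ → ℕ → ℝ} {x y : ℕ → ℝ} {ε : ℝ}

lemma row_nonneg (h : IsWSNE nr nc A B x y ε) (i : ℕ) : 0 ≤ x i := h.1 i

lemma row_eq_zero (h : IsWSNE nr nc A B x y ε) {i : ℕ} (hi : nr ≤ i) : x i = 0 := h.2.1 i hi

lemma row_sum_eq_one (h : IsWSNE nr nc A B x y ε) : ∑ i ∈ range nr, x i = 1 := h.2.2.1

lemma col_nonneg (h : IsWSNE nr nc A B x y ε) (j : ℕ) : 0 ≤ y j := h.2.2.2.1 j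

lemma col_eq_zero (h : IsWSNE nr nc A B x y ε) {j : ℕ} (hj : nc ≤ j) : y j = 0 := h.2.2.2.2.1 j hj

lemma col_sum_eq_one (h : IsWSNE nr nc A B x y ε) : ∑ j ∈ range nc, y j = 1 := h.2.2.2.2.2.1

lemma rowPayoff_sub_le (h : IsWSNE nr nc A B x y ε) {i i' : ℕ} (hi : i < nr) (hx : 0 < x i)
    (hi' : i' < nr) : rowPayoff nc A y i' - ε ≤ rowPayoff nc A y i :=
  h.2.2.2.2.2.2.1 i hi hx i' hi'

lemma colPayoff_sub_le (h : IsWSNE nr nc A B x y ε) {j j' : ℕ} (hj : j < nc) (hy : 0 < y j)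
    (hj' : j' < nc) : colPayoff nr B x j' - ε ≤ colPayoff nr B x j :=
  h.2.2.2.2.2.2.2 j hj hy j' hj'

lemma eps_nonneg (h : IsWSNE nr nc A B x y ε) : 0 ≤ ε := by
  obtain ⟨i, hi, hx⟩ := exists_lt_of_sum_lt (s := range nr) (f := fun _ => 0) (g := x)
    (by simp [h.row_sum_eq_one])
  linarith [h.rowPayoff_sub_le (mem_range.mp hi) hx (mem_range.mp hi)]

end IsWSNE

lemma rowPayoff_le_mul_sum {nc : ℕ} {A : ℕ → ℕ → ℝ} {y : ℕ → ℝ} {M : ℝ} {i : ℕ}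
    (hA : ∀ j < nc, A i j ≤ M) (hy : ∀ j, 0 ≤ y j) :
    rowPayoff nc A y i ≤ M * ∑ j ∈ range nc, y j := by
  rw [rowPayoff, mul_sum]
  exact sum_le_sum fun j hj => mul_le_mul_of_nonneg_right (hA j (mem_range.mp hj)) (hy j)

lemma colPayoff_le_mul_sum {nr : ℕ} {B : ℕ → ℕ → ℝ} {x : ℕ → ℝ} {M : ℝ} {j : ℕ}
    (hB : ∀ i < nr, B i j ≤ M) (hx : ∀ i, 0 ≤ x i) :
    colPayoff nr B x j ≤ M * ∑ i ∈ range nr, x i := by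
  rw [colPayoff, mul_sum]
  exact sum_le_sum fun i hi => by
    rw [mul_comm M]; exact mul_le_mul_of_nonneg_left (hB i (mem_range.mp hi)) (hx i)

lemma exists_one_div_le_colPayoff {nr nc : ℕ} {B : ℕ → ℕ → ℝ} {x : ℕ → ℝ}
    (hx0 : ∀ i, 0 ≤ x i) (hx1 : ∑ i ∈ range nr, x i = 1)
    (hB0 : ∀ i < nr, ∀ j < nc, 0 ≤ B i j) (hB1 : ∀ i < nr, ∃ j < nc, 1 ≤ B i j) :
    ∃ j < nc, 1 / (nc : ℝ) ≤ colPayoff nr B x j := by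
  have hrow : ∀ i < nr, 1 ≤ ∑ j ∈ range nc, B i j := fun i hi => by
    obtain ⟨j, hj, h1⟩ := hB1 i hi
    exact h1.trans (single_le_sum (fun j hj => hB0 i hi j (mem_range.mp hj)) (mem_range.mpr hj))
  have htotal : 1 ≤ ∑ j ∈ range nc, colPayoff nr B x j := by
    calc (1 : ℝ) = ∑ i ∈ range nr, x i * 1 := by simp [hx1]
      _ ≤ ∑ i ∈ range nr, x i * ∑ j ∈ range nc, B i j :=
        sum_le_sum fun i hi => mul_le_mul_of_nonneg_left (hrow i (mem_range.mp hi)) (hx0 i)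
      _ = ∑ j ∈ range nc, colPayoff nr B x j := by simp only [colPayoff, mul_sum]; exact sum_comm
  have hnc : 0 < nc := by
    by_contra h
    norm_num [Nat.eq_zero_of_not_pos h] at htotal
  obtain ⟨j, hj, hle⟩ := exists_le_of_sum_le (nonempty_range_iff.mpr hnc.ne')
    (f := fun _ => 1 / (nc : ℝ)) (g := colPayoff nr B x) (by simpa [hnc.ne'] using htotal)
  exact ⟨j, mem_range.mp hj, hle⟩

lemma div_sub_le_div {P P' S ε : ℝ} (hS : 0 < S) (h : P' - ε * S ≤ P) : P' / S - ε ≤ P / S :=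
  calc P' / S - ε = (P' - ε * S) / S := by field_simp
    _ ≤ P / S := div_le_div_of_nonneg_right h hS.le

lemma isWSNE_div_sum {nr nc : ℕ} {A B : ℕ → ℕ → ℝ} {x y : ℕ → ℝ} {ε : ℝ}
    (hx0 : ∀ i, 0 ≤ x i) (hxz : ∀ i, nr ≤ i → x i = 0) (hX : 0 < ∑ i ∈ range nr, x i)
    (hy0 : ∀ j, 0 ≤ y j) (hyz : ∀ j, nc ≤ j → y j = 0) (hY : 0 < ∑ j ∈ range nc, y j)
    (hrow : ∀ i < nr, 0 < x i → ∀ i' < nr,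
      rowPayoff nc A y i' - ε * ∑ j ∈ range nc, y j ≤ rowPayoff nc A y i)
    (hcol : ∀ j < nc, 0 < y j → ∀ j' < nc,
      colPayoff nr B x j' - ε * ∑ i ∈ range nr, x i ≤ colPayoff nr B x j) :
    IsWSNE nr nc A B (fun i => x i / ∑ i' ∈ range nr, x i')
      (fun j => y j / ∑ j' ∈ range nc, y j') ε := by
  have hrowdiv : ∀ i, ∑ j ∈ range nc, A i j * (y j / ∑ j' ∈ range nc, y j') =
      rowPayoff nc A y i / ∑ j ∈ range nc, y j := fun i => by
    simp only [rowPayoff, sum_div, mul_div_assoc]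
  have hcoldiv : ∀ j, ∑ i ∈ range nr, x i / (∑ i' ∈ range nr, x i') * B i j =
      colPayoff nr B x j / ∑ i ∈ range nr, x i := fun j => by
    simp only [colPayoff, sum_div, div_mul_eq_mul_div]
  refine ⟨fun i => div_nonneg (hx0 i) hX.le, fun i hi => by simp [hxz i hi],
    by rw [← sum_div, div_self hX.ne'], fun j => div_nonneg (hy0 j) hY.le,
    fun j hj => by simp [hyz j hj], by rw [← sum_div, div_self hY.ne'], ?_, ?_⟩
  · intro i hi hxi i' hi'
    rw [ge_iff_le, hrowdiv, hrowdiv]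
    exact div_sub_le_div hY (hrow i hi ((div_pos_iff_of_pos_right hX).mp hxi) i' hi')
  · intro j hj hyj j' hj'
    rw [ge_iff_le, hcoldiv, hcoldiv]
    exact div_sub_le_div hX (hcol j hj ((div_pos_iff_of_pos_right hY).mp hyj) j' hj')

lemma sum_range_three_mul {M : Type*} [AddCommMonoid M] (f : ℕ → M) (k : ℕ) :
    ∑ c ∈ range (3 * k), f c = ∑ j ∈ range k, (f (3 * j) + f (3 * j + 1) + f (3 * j + 2)) := by
  induction k with
  | zero => simp
  | succ k ih =>
    rw [show 3 * (k + 1) = 3 * k + 1 + 1 + 1 by ring, sum_range_succ, sum_range_succ,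
      sum_range_succ, ih, sum_range_succ, add_assoc, add_assoc, add_assoc]

lemma sum_range_split {M : Type*} [AddCommMonoid M] {k nc : ℕ} (hk : k ≤ nc) (f : ℕ → M) :
    ∑ j ∈ range nc, f j = ∑ j ∈ range k, f j + ∑ m ∈ range (nc - k), f (k + m) := by
  rw [← sum_range_add, Nat.add_sub_cancel' hk]

lemma sum_range_two_mul_add {M : Type*} [AddCommMonoid M] {k nc : ℕ} (hk : k ≤ nc)
    (f : ℕ → M) :
    ∑ c ∈ range (2 * k + nc), f c =
      ∑ j ∈ range k, (f (3 * j) + f (3 * j + 1) + f (3 * j + 2)) +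
        ∑ m ∈ range (nc - k), f (3 * k + m) := by
  rw [show 2 * k + nc = 3 * k + (nc - k) by omega, sum_range_add, sum_range_three_mul]

/-- The row of `encode(A_j)` for an entry `v` of `A_j`: its entries in the columns `3j` and
`3j + 1` of `A'`. -/
noncomputable def encode (K v : ℝ) : ℝ × ℝ :=
  (if v = 1 then 1 else 0, if v = K then K / 2 else if v = 2 then 1 else 0)

/-- The column of `A'` and `B'` that simulates the column `j` of `(A, B)`: `cb₂ʲ` for `j < k`. -/
def simCol (k j : ℕ) : ℕ := if j < k then 3 * j + 2 else 2 * k + j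

lemma simCol_lt {k nc j : ℕ} (hk : k ≤ nc) (hj : j < nc) : simCol k j < 2 * k + nc := by
  unfold simCol; split_ifs <;> omega

section Entries

variable {k j : ℕ} {K : ℝ} {A B : ℕ → ℕ → ℝ}

lemma scs1A_two_mul (hj : j < k) (c : ℕ) :
    scs1A k K A (2 * j) c = if c = 3 * j then 2 else if c = 3 * j + 2 then 1 else 0 := by
  simp only [scs1A, show 2 * j < 2 * k by omega, show 2 * j / 2 = j by omega,
    Nat.mul_mod_right, if_true]
  split_ifs <;> first | rfl | omega

lemma scs1A_two_mul_add_one (hj : j < k) (c : ℕ) :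
    scs1A k K A (2 * j + 1) c = if c = 3 * j + 1 then 1 else if c = 3 * j + 2 then 1 else 0 := by
  simp only [scs1A, show 2 * j + 1 < 2 * k by omega, show (2 * j + 1) / 2 = j by omega,
    show (2 * j + 1) % 2 = 1 by omega, if_true]
  split_ifs <;> first | rfl | contradiction | omega

lemma scs1A_enc_three_mul (hj : j < k) (i : ℕ) :
    scs1A k K A (2 * k + i) (3 * j) = (encode K (A i j)).1 := by
  simp [scs1A, encode, show 3 * j < 3 * k by omega]

lemma scs1A_enc_three_mul_add_one (hj : j < k) (i : ℕ) :
    scs1A k K A (2 * k + i) (3 * j + 1) = (encode K (A i j)).2 := by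
  simp [scs1A, encode, show 3 * j + 1 < 3 * k by omega, show (3 * j + 1) / 3 = j by omega,
    Nat.add_mod]

lemma scs1A_enc_three_mul_add_two (hj : j < k) (i : ℕ) :
    scs1A k K A (2 * k + i) (3 * j + 2) = 0 := by
  simp [scs1A, show 3 * j + 2 < 3 * k by omega, Nat.add_mod]

lemma scs1A_enc_tail (i m : ℕ) : scs1A k K A (2 * k + i) (3 * k + m) = A i (k + m) := by
  simp [scs1A, show 3 * k + m - 2 * k = k + m by omega]

lemma scs1B_three_mul (hj : j < k) (r : ℕ) :
    scs1B k B r (3 * j) = if r = 2 * j + 1 then 1 else 0 := by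
  unfold scs1B
  split_ifs <;> first | rfl | omega

lemma scs1B_three_mul_add_one (hj : j < k) (r : ℕ) :
    scs1B k B r (3 * j + 1) = if r = 2 * j then 1 else 0 := by
  unfold scs1B
  split_ifs <;> first | rfl | omega

lemma scs1B_simCol (r j : ℕ) :
    scs1B k B r (simCol k j) = if 2 * k ≤ r then B (r - 2 * k) j else 0 := by
  unfold scs1B simCol
  split_ifs <;> first | rfl | omega | (congr 1; omega)

end Entries

section Payoffs

variable {nr nc k j : ℕ} {K : ℝ} {A B : ℕ → ℕ → ℝ}

lemma rowPayoff_scs1A_two_mul (hk : k ≤ nc) (hj : j < k) (y : ℕ → ℝ) :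
    rowPayoff (2 * k + nc) (scs1A k K A) y (2 * j) = 2 * y (3 * j) + y (3 * j + 2) := by
  rw [rowPayoff, sum_eq_add_of_mem (3 * j) (3 * j + 2) (by simp; omega) (by simp; omega)
    (by omega) fun c _ hc => by simp [scs1A_two_mul hj, hc.1, hc.2]]
  simp [scs1A_two_mul hj]

lemma rowPayoff_scs1A_two_mul_add_one (hk : k ≤ nc) (hj : j < k) (y : ℕ → ℝ) :
    rowPayoff (2 * k + nc) (scs1A k K A) y (2 * j + 1) = y (3 * j + 1) + y (3 * j + 2) := by
  rw [rowPayoff, sum_eq_add_of_mem (3 * j + 1) (3 * j + 2) (by simp; omega) (by simp; omega)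
    (by omega) fun c _ hc => by simp [scs1A_two_mul_add_one hj, hc.1, hc.2]]
  simp [scs1A_two_mul_add_one hj]

lemma rowPayoff_scs1A_enc (hk : k ≤ nc) (y : ℕ → ℝ) (i : ℕ) :
    rowPayoff (2 * k + nc) (scs1A k K A) y (2 * k + i) =
      ∑ j ∈ range k, ((encode K (A i j)).1 * y (3 * j) + (encode K (A i j)).2 * y (3 * j + 1)) +
        ∑ m ∈ range (nc - k), A i (k + m) * y (3 * k + m) := by
  rw [rowPayoff, sum_range_two_mul_add hk]
  congr 1
  · refine sum_congr rfl fun j hj => ?_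
    have hj := mem_range.mp hj
    rw [scs1A_enc_three_mul hj, scs1A_enc_three_mul_add_one hj, scs1A_enc_three_mul_add_two hj,
      zero_mul, add_zero]
  · simp only [scs1A_enc_tail]

lemma colPayoff_scs1B_three_mul (hj : j < k) (x : ℕ → ℝ) :
    colPayoff (2 * k + nr) (scs1B k B) x (3 * j) = x (2 * j + 1) := by
  simp [colPayoff, scs1B_three_mul hj, show 2 * j + 1 < 2 * k + nr by omega]

lemma colPayoff_scs1B_three_mul_add_one (hj : j < k) (x : ℕ → ℝ) :
    colPayoff (2 * k + nr) (scs1B k B) x (3 * j + 1) = x (2 * j) := by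
  simp [colPayoff, scs1B_three_mul_add_one hj, show 2 * j < 2 * k + nr by omega]

lemma colPayoff_scs1B_simCol (x : ℕ → ℝ) (j : ℕ) :
    colPayoff (2 * k + nr) (scs1B k B) x (simCol k j) =
      colPayoff nr B (fun i => x (2 * k + i)) j := by
  rw [colPayoff, sum_range_add, sum_eq_zero fun r hr => by
    simp [scs1B_simCol, show ¬ 2 * k ≤ r by simpa using hr], zero_add]
  simp [colPayoff, scs1B_simCol]

lemma scs1Y_of_lt {ε : ℝ} {y : ℕ → ℝ} (hj : j < k) :
    scs1Y k ε y j = if 11 * ε ≤ y (3 * j) + y (3 * j + 1) then y (3 * j) else 0 :=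
  if_pos hj

lemma scs1Y_tail {ε : ℝ} (y : ℕ → ℝ) (m : ℕ) : scs1Y k ε y (k + m) = y (3 * k + m) := by
  simp [scs1Y, show 2 * k + (k + m) = 3 * k + m by omega]

lemma scs1Y_nonneg {ε : ℝ} {y : ℕ → ℝ} (hy : ∀ c, 0 ≤ y c) (j : ℕ) : 0 ≤ scs1Y k ε y j := by
  unfold scs1Y
  split_ifs <;> first | exact hy _ | exact le_rfl

lemma rowPayoff_scs1Y (hk : k ≤ nc) (ε : ℝ) (y : ℕ → ℝ) (i : ℕ) :
    rowPayoff nc A (scs1Y k ε y) i =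
      ∑ j ∈ range k, A i j * scs1Y k ε y j + ∑ m ∈ range (nc - k), A i (k + m) * y (3 * k + m) := by
  simp only [rowPayoff, sum_range_split hk, scs1Y_tail]

lemma sum_scs1Y (hk : k ≤ nc) (ε : ℝ) (y : ℕ → ℝ) :
    ∑ j ∈ range nc, scs1Y k ε y j =
      ∑ j ∈ range k, scs1Y k ε y j + ∑ m ∈ range (nc - k), y (3 * k + m) := by
  simp only [sum_range_split hk, scs1Y_tail]

end Payoffs

section Encode

variable {K v a b : ℝ}

lemma encode_payoff_nonneg (hK : 0 ≤ K) (ha : 0 ≤ a) (hb : 0 ≤ b) :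
    0 ≤ (encode K v).1 * a + (encode K v).2 * b := by
  unfold encode
  split_ifs <;> positivity

lemma encode_self (hK : K ≠ 1) : encode K K = (0, K / 2) := by
  simp [encode, hK]

/-- Above the threshold the two sides differ by `0`, `|b - 2a|` or `(K/2)|b - 2a|`; below it
both are at most `4(a + b) < 44ε`. -/
lemma abs_encode_payoff_sub_le {ε : ℝ} (hK4 : 4 ≤ K) (hK8 : K ≤ 8)
    (hv : v = 0 ∨ v = 1 ∨ v = 2 ∨ v = K) (ha : 0 ≤ a) (hb : 0 ≤ b) (hab : |b - 2 * a| ≤ ε) :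
    |(encode K v).1 * a + (encode K v).2 * b - v * (if 11 * ε ≤ a + b then a else 0)| ≤
      44 * ε := by
  rw [abs_le] at hab ⊢
  have hK0 : K ≠ 0 := by linarith
  have hK1 : K ≠ 1 := by linarith
  have hK2 : K ≠ 2 := by linarith
  rcases hv with rfl | rfl | rfl | rfl <;>
    norm_num [encode, hK0.symm, hK1.symm, hK2.symm] <;> (try split_ifs) <;>
    (try constructor) <;> nlinarith

end Encode

namespace Scs1Input

variable {n nr nc k : ℕ} {K : ℝ} {A B : ℕ → ℕ → ℝ}

lemma nr_le (hin : Scs1Input n nr nc k K A B) : nr ≤ n := hin.1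

lemma nc_le (hin : Scs1Input n nr nc k K A B) : nc ≤ n := hin.2.1

lemma k_le (hin : Scs1Input n nr nc k K A B) : k ≤ nc := hin.2.2.1

lemma A_mem (hin : Scs1Input n nr nc k K A B) {i j : ℕ} (hi : i < nr) (hj : j < nc) :
    0 ≤ A i j ∧ A i j ≤ K := hin.2.2.2.1 i hi j hj

lemma B_mem (hin : Scs1Input n nr nc k K A B) {i j : ℕ} (hi : i < nr) (hj : j < nc) :
    0 ≤ B i j ∧ B i j ≤ K := hin.2.2.2.2.1 i hi j hj

lemma exists_one_le_B (hin : Scs1Input n nr nc k K A B) {i : ℕ} (hi : i < nr) :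
    ∃ j < nc, 1 ≤ B i j := hin.2.2.2.2.2.2.2.1 i hi

lemma exists_A_eq (hin : Scs1Input n nr nc k K A B) {j : ℕ} (hj : j < k) :
    ∃ i < nr, A i j = K := by
  obtain ⟨i, hi⟩ := card_pos.mp ((hin.2.2.2.2.2.2.2.2.2.1 j hj).1 ▸ Nat.one_pos)
  rw [mem_filter, mem_range] at hi
  exact ⟨i, hi⟩

lemma A_eq_or (hin : Scs1Input n nr nc k K A B) {i j : ℕ} (hi : i < nr) (hj : j < k) :
    A i j = 0 ∨ A i j = 1 ∨ A i j = 2 ∨ A i j = K :=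
  (hin.2.2.2.2.2.2.2.2.2.1 j hj).2.1 i hi

end Scs1Input

section Equilibrium

variable {n nr nc k j : ℕ} {K ε : ℝ} {A B : ℕ → ℕ → ℝ} {xstar ystar : ℕ → ℝ}

lemma scs1B_nonneg (hin : Scs1Input n nr nc k K A B) :
    ∀ r < 2 * k + nr, ∀ c < 2 * k + nc, 0 ≤ scs1B k B r c := by
  intro r hr c hc
  have hk := hin.k_le
  unfold scs1B
  split_ifs <;> first | exact (hin.B_mem (by omega) (by omega)).1 | norm_num

lemma exists_one_le_scs1B (hin : Scs1Input n nr nc k K A B) :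
    ∀ r < 2 * k + nr, ∃ c < 2 * k + nc, 1 ≤ scs1B k B r c := by
  intro r hr
  have hk := hin.k_le
  by_cases hrk : r < 2 * k
  · obtain ⟨j, hj, rfl | rfl⟩ : ∃ j < k, r = 2 * j ∨ r = 2 * j + 1 := ⟨r / 2, by omega, by omega⟩
    · exact ⟨3 * j + 1, by omega, by simp [scs1B_three_mul_add_one hj]⟩
    · exact ⟨3 * j, by omega, by simp [scs1B_three_mul hj]⟩
  · obtain ⟨j, hj, hB1⟩ := hin.exists_one_le_B (i := r - 2 * k) (by omega)
    exact ⟨simCol k j, simCol_lt hk hj, by simpa [scs1B_simCol, not_lt.mp hrk] using hB1⟩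

/-- Every row of `B'` has an entry `≥ 1`, so its `2k + nc ≤ 3n` column payoffs add up to at
least `1`. -/
lemma one_div_sub_le_colPayoff (hin : Scs1Input n nr nc k K A B)
    (hw : IsWSNE (2 * k + nr) (2 * k + nc) (scs1A k K A) (scs1B k B) xstar ystar ε)
    {c : ℕ} (hc : c < 2 * k + nc) (hy : 0 < ystar c) :
    1 / (3 * n) - ε ≤ colPayoff (2 * k + nr) (scs1B k B) xstar c := by
  obtain ⟨c₀, hc₀, hpay⟩ := exists_one_div_le_colPayoff hw.row_nonneg hw.row_sum_eq_one
    (scs1B_nonneg hin) (exists_one_le_scs1B hin)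
  have := hin.nc_le
  have := hin.k_le
  have hsize : 1 / (3 * n : ℝ) ≤ 1 / ((2 * k + nc : ℕ) : ℝ) :=
    one_div_le_one_div_of_le (by exact_mod_cast (by omega : 0 < 2 * k + nc))
      (by exact_mod_cast (by omega : 2 * k + nc ≤ 3 * n))
  linarith [hw.colPayoff_sub_le hc hy hc₀]

lemma xstar_pos_of_colPayoff (hin : Scs1Input n nr nc k K A B)
    (hw : IsWSNE (2 * k + nr) (2 * k + nc) (scs1A k K A) (scs1B k B) xstar ystar ε)
    (hε : 11 * n * ε < 1) {c r : ℕ} (hc : c < 2 * k + nc) (hy : 0 < ystar c)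
    (hpay : colPayoff (2 * k + nr) (scs1B k B) xstar c = xstar r) : 0 < xstar r := by
  have := hin.nc_le
  have := hin.k_le
  have hn : (0 : ℝ) < n := by exact_mod_cast (by omega : 0 < n)
  have hpos : ε < 1 / (3 * n) := by rw [lt_div_iff₀ (by positivity)]; linarith
  linarith [one_div_sub_le_colPayoff hin hw hc hy]

lemma abs_ystar_sub_two_mul_le (hin : Scs1Input n nr nc k K A B)
    (hw : IsWSNE (2 * k + nr) (2 * k + nc) (scs1A k K A) (scs1B k B) xstar ystar ε)
    (hε : 11 * n * ε < 1) (hj : j < k) : |ystar (3 * j + 1) - 2 * ystar (3 * j)| ≤ ε := by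
  have hk := hin.k_le
  have hrow_even := rowPayoff_scs1A_two_mul (K := K) (A := A) hk hj ystar
  have hrow_odd := rowPayoff_scs1A_two_mul_add_one (K := K) (A := A) hk hj ystar
  rw [abs_le]
  constructor
  · rcases (hw.col_nonneg (3 * j)).eq_or_lt with ha | ha
    · linarith [hw.col_nonneg (3 * j + 1), hw.eps_nonneg]
    · have hx := xstar_pos_of_colPayoff hin hw hε (by omega) ha (colPayoff_scs1B_three_mul hj xstar)
      linarith [hw.rowPayoff_sub_le (by omega) hx (i' := 2 * j) (by omega)]
  · rcases (hw.col_nonneg (3 * j + 1)).eq_or_lt with hb | hb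
    · linarith [hw.col_nonneg (3 * j), hw.eps_nonneg]
    · have hx := xstar_pos_of_colPayoff hin hw hε (by omega) hb
        (colPayoff_scs1B_three_mul_add_one hj xstar)
      linarith [hw.rowPayoff_sub_le (by omega) hx (i' := 2 * j + 1) (by omega)]

lemma encode_payoff_le_rowPayoff (hin : Scs1Input n nr nc k K A B) {y : ℕ → ℝ}
    (hy : ∀ c, 0 ≤ y c) {i : ℕ} (hi : i < nr) (hj : j < k) :
    (encode K (A i j)).1 * y (3 * j) + (encode K (A i j)).2 * y (3 * j + 1) ≤
      rowPayoff (2 * k + nc) (scs1A k K A) y (2 * k + i) := by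
  have hk := hin.k_le
  have hK : 0 ≤ K := (hin.A_mem hi (by omega : 0 < nc)).1.trans (hin.A_mem hi (by omega : 0 < nc)).2
  rw [rowPayoff_scs1A_enc hk]
  have hgadget := single_le_sum (f := fun j => (encode K (A i j)).1 * y (3 * j) +
    (encode K (A i j)).2 * y (3 * j + 1)) (fun j _ => encode_payoff_nonneg hK (hy _) (hy _))
    (mem_range.mpr hj)
  have htail : 0 ≤ ∑ m ∈ range (nc - k), A i (k + m) * y (3 * k + m) :=
    sum_nonneg fun m hm => mul_nonneg (hin.A_mem hi (by simp at hm; omega)).1 (hy _)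
  linarith

/-- The encoding row of the `K` in column `j` pays at least `(K/2) b_j ≥ 2b_j`, row `2j + 1` pays
`b_j + c_j`, and above the threshold `b_j ≈ 2a_j` is at least `7ε`, which forces `c_j > 0`. -/
lemma ystar_three_mul_add_two_pos (hin : Scs1Input n nr nc k K A B)
    (hw : IsWSNE (2 * k + nr) (2 * k + nc) (scs1A k K A) (scs1B k B) xstar ystar ε)
    (hK4 : 4 ≤ K) (hε : 11 * n * ε < 1) (hj : j < k)
    (hab : 11 * ε ≤ ystar (3 * j) + ystar (3 * j + 1)) (ha : 0 < ystar (3 * j)) :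
    0 < ystar (3 * j + 2) := by
  have hk := hin.k_le
  obtain ⟨i, hi⟩ := hin.exists_A_eq hj
  have hx := xstar_pos_of_colPayoff hin hw hε (by omega) ha (colPayoff_scs1B_three_mul hj xstar)
  have hbest := hw.rowPayoff_sub_le (by omega) hx (i' := 2 * k + i) (by omega)
  rw [rowPayoff_scs1A_two_mul_add_one hk hj] at hbest
  have henc := encode_payoff_le_rowPayoff hin hw.col_nonneg hi.1 hj
  rw [hi.2, encode_self (by linarith)] at henc
  have hb := hw.col_nonneg (3 * j + 1)
  have hKb : 2 * ystar (3 * j + 1) ≤ K / 2 * ystar (3 * j + 1) :=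
    mul_le_mul_of_nonneg_right (by linarith) hb
  have hbal := (abs_le.mp (abs_ystar_sub_two_mul_le hin hw hε hj)).1
  simp only [zero_mul, zero_add] at henc
  linarith

/-- Otherwise `y*` lives on the columns `a_j, b_j`; the heaviest gadget then passes the
threshold and has `a_j > 0`, so its `c_j` is played after all. -/
lemma exists_ystar_simCol_pos (hin : Scs1Input n nr nc k K A B)
    (hw : IsWSNE (2 * k + nr) (2 * k + nc) (scs1A k K A) (scs1B k B) xstar ystar ε)
    (hK4 : 4 ≤ K) (hε : 11 * n * ε < 1) : ∃ j < nc, 0 < ystar (simCol k j) := by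
  have hk := hin.k_le
  by_contra! hunplayed
  have hc : ∀ j < k, ystar (3 * j + 2) = 0 := fun j hj =>
    le_antisymm (by simpa [simCol, hj] using hunplayed j (by omega)) (hw.col_nonneg _)
  have ht : ∀ m < nc - k, ystar (3 * k + m) = 0 := fun m hm => le_antisymm
    (by simpa [simCol, show 2 * k + (k + m) = 3 * k + m by omega] using
      hunplayed (k + m) (by omega)) (hw.col_nonneg _)
  have hmass : ∑ j ∈ range k, (ystar (3 * j) + ystar (3 * j + 1)) = 1 := by
    rw [← hw.col_sum_eq_one, sum_range_two_mul_add hk,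
      sum_eq_zero fun m hm => ht m (mem_range.mp hm), add_zero]
    exact sum_congr rfl fun j hj => by rw [hc j (mem_range.mp hj), add_zero]
  have hk0 : 0 < k := Nat.pos_of_ne_zero fun h => by simp [h] at hmass
  have hkR : (0 : ℝ) < k := by exact_mod_cast hk0
  obtain ⟨j, hj, hheavy⟩ := exists_le_of_sum_le (nonempty_range_iff.mpr hk0.ne')
    (f := fun _ => 1 / (k : ℝ)) (g := fun j => ystar (3 * j) + ystar (3 * j + 1))
    (by simp [hmass, hkR.ne'])
  have hj := mem_range.mp hj
  have hthreshold : 11 * ε ≤ 1 / (k : ℝ) := by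
    rw [le_div_iff₀ hkR]
    nlinarith [hw.eps_nonneg, (by exact_mod_cast (hk.trans hin.nc_le) : (k : ℝ) ≤ n)]
  have hbal := (abs_le.mp (abs_ystar_sub_two_mul_le hin hw hε hj)).2
  have ha : 0 < ystar (3 * j) := by
    linarith [hw.col_nonneg (3 * j + 1), one_div_pos.mpr hkR]
  have := ystar_three_mul_add_two_pos hin hw hK4 hε hj (hthreshold.trans hheavy) ha
  linarith [hc j hj]

lemma one_le_mul_sum_xstar (hin : Scs1Input n nr nc k K A B)
    (hw : IsWSNE (2 * k + nr) (2 * k + nc) (scs1A k K A) (scs1B k B) xstar ystar ε)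
    (hK4 : 4 ≤ K) (hK8 : K ≤ 8) (hε : 11 * n * ε < 1) :
    1 ≤ 33 * n * ∑ i ∈ range nr, xstar (2 * k + i) := by
  obtain ⟨j, hj, hy⟩ := exists_ystar_simCol_pos hin hw hK4 hε
  have hpay := one_div_sub_le_colPayoff hin hw (simCol_lt hin.k_le hj) hy
  rw [colPayoff_scs1B_simCol] at hpay
  have hbound := colPayoff_le_mul_sum (M := 8) (fun i hi => (hin.B_mem hi hj).2.trans hK8)
    (fun i => hw.row_nonneg (2 * k + i))
  have hn : (0 : ℝ) < n := by exact_mod_cast (by have := hin.nc_le; omega : 0 < n)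
  rw [div_sub' (by positivity), div_le_iff₀' (by positivity)] at hpay
  nlinarith

lemma ystar_simCol_pos_of_scs1Y_pos (hin : Scs1Input n nr nc k K A B)
    (hw : IsWSNE (2 * k + nr) (2 * k + nc) (scs1A k K A) (scs1B k B) xstar ystar ε)
    (hK4 : 4 ≤ K) (hε : 11 * n * ε < 1) (hy : 0 < scs1Y k ε ystar j) :
    0 < ystar (simCol k j) := by
  by_cases hj : j < k
  · rw [scs1Y_of_lt hj] at hy
    split_ifs at hy with hab
    · simpa [simCol, hj] using ystar_three_mul_add_two_pos hin hw hK4 hε hj hab hy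
    · exact absurd hy (lt_irrefl 0)
  · simpa [simCol, scs1Y, hj] using hy

lemma abs_rowPayoff_enc_sub_le (hin : Scs1Input n nr nc k K A B)
    (hw : IsWSNE (2 * k + nr) (2 * k + nc) (scs1A k K A) (scs1B k B) xstar ystar ε)
    (hK4 : 4 ≤ K) (hK8 : K ≤ 8) (hε : 11 * n * ε < 1) {i : ℕ} (hi : i < nr) :
    |rowPayoff (2 * k + nc) (scs1A k K A) ystar (2 * k + i) -
      rowPayoff nc A (scs1Y k ε ystar) i| ≤ 44 * n * ε := by
  have hk := hin.k_le
  rw [rowPayoff_scs1A_enc hk, rowPayoff_scs1Y hk, add_sub_add_right_eq_sub, ← sum_sub_distrib]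
  calc _ ≤ ∑ j ∈ range k, |(encode K (A i j)).1 * ystar (3 * j) +
          (encode K (A i j)).2 * ystar (3 * j + 1) - A i j * scs1Y k ε ystar j| :=
        abs_sum_le_sum_abs _ _
    _ ≤ ∑ _j ∈ range k, 44 * ε := sum_le_sum fun j hj => by
        have hj := mem_range.mp hj
        rw [scs1Y_of_lt hj]
        exact abs_encode_payoff_sub_le hK4 hK8 (hin.A_eq_or hi hj) (hw.col_nonneg _)
          (hw.col_nonneg _) (abs_ystar_sub_two_mul_le hin hw hε hj)
    _ = k * (44 * ε) := by simp
    _ ≤ n * (44 * ε) := mul_le_mul_of_nonneg_right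
        (by exact_mod_cast hk.trans hin.nc_le) (by linarith [hw.eps_nonneg])
    _ = 44 * n * ε := by ring

lemma ystar_three_mul_add_two_le (hin : Scs1Input n nr nc k K A B)
    (hw : IsWSNE (2 * k + nr) (2 * k + nc) (scs1A k K A) (scs1B k B) xstar ystar ε)
    (hK4 : 4 ≤ K) (hK8 : K ≤ 8) (hε : 11 * n * ε < 1) {i : ℕ} (hi : i < nr)
    (hx : 0 < xstar (2 * k + i)) (hj : j < k) :
    ystar (3 * j + 2) ≤ 8 * ∑ j ∈ range nc, scs1Y k ε ystar j + 45 * n * ε := by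
  have hk := hin.k_le
  have hbest := hw.rowPayoff_sub_le (by omega) hx (i' := 2 * j) (by omega)
  rw [rowPayoff_scs1A_two_mul hk hj] at hbest
  have happrox := (abs_le.mp (abs_rowPayoff_enc_sub_le hin hw hK4 hK8 hε hi)).2
  have hbound := rowPayoff_le_mul_sum (M := 8) (fun j hj => (hin.A_mem hi hj).2.trans hK8)
    (scs1Y_nonneg (k := k) (ε := ε) hw.col_nonneg) (i := i)
  have hn : (1 : ℝ) ≤ n := by exact_mod_cast (by have := hin.nr_le; omega : 1 ≤ n)
  nlinarith [hw.col_nonneg (3 * j), hw.eps_nonneg]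

lemma ystar_add_le_scs1Y (hin : Scs1Input n nr nc k K A B)
    (hw : IsWSNE (2 * k + nr) (2 * k + nc) (scs1A k K A) (scs1B k B) xstar ystar ε)
    (hε : 11 * n * ε < 1) (hj : j < k) :
    ystar (3 * j) + ystar (3 * j + 1) ≤ 3 * scs1Y k ε ystar j + 11 * ε := by
  have hbal := (abs_le.mp (abs_ystar_sub_two_mul_le hin hw hε hj)).2
  rw [scs1Y_of_lt hj]
  split_ifs with hab <;> linarith [hw.eps_nonneg]

/-- A played encoding row pays at most `8 ∑ y' + 44nε` and so caps every `c_j`; the columns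
`a_j, b_j` and the tail carry at most `3 ∑ y' + 11nε` of the unit mass of `y*`. -/
lemma one_le_mul_sum_scs1Y (hin : Scs1Input n nr nc k K A B)
    (hw : IsWSNE (2 * k + nr) (2 * k + nc) (scs1A k K A) (scs1B k B) xstar ystar ε)
    (hK4 : 4 ≤ K) (hK8 : K ≤ 8) (hε : 240 * n ^ 2 * ε < 1) :
    1 ≤ 15 * n * ∑ j ∈ range nc, scs1Y k ε ystar j := by
  set Y := ∑ j ∈ range nc, scs1Y k ε ystar j
  have hY0 : 0 ≤ Y := sum_nonneg fun j _ => scs1Y_nonneg hw.col_nonneg j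
  have hk := hin.k_le
  have hε0 := hw.eps_nonneg
  have hnn : (n : ℝ) ≤ n ^ 2 := by exact_mod_cast Nat.le_self_pow two_ne_zero n
  have hε11 : 11 * n * ε < 1 := by nlinarith
  have hX := one_le_mul_sum_xstar hin hw hK4 hK8 hε11
  have hXpos : 0 < ∑ i ∈ range nr, xstar (2 * k + i) :=
    pos_of_mul_pos_right (one_pos.trans_le hX) (by positivity)
  obtain ⟨i, hi, hx⟩ := exists_lt_of_sum_lt (s := range nr) (f := fun _ => 0)
    (g := fun i => xstar (2 * k + i)) (by simpa using hXpos)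
  have hi := mem_range.mp hi
  have hn : (1 : ℝ) ≤ n := by exact_mod_cast (by have := hin.nr_le; omega : 1 ≤ n)
  have hmass := hw.col_sum_eq_one
  rw [sum_range_two_mul_add hk] at hmass
  have hgadgets : ∑ j ∈ range k, (ystar (3 * j) + ystar (3 * j + 1) + ystar (3 * j + 2)) ≤
      3 * ∑ j ∈ range k, scs1Y k ε ystar j + k * (11 * ε + (8 * Y + 45 * n * ε)) :=
    calc _ ≤ ∑ j ∈ range k, (3 * scs1Y k ε ystar j + (11 * ε + (8 * Y + 45 * n * ε))) :=
          sum_le_sum fun j hj => by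
            have hj := mem_range.mp hj
            linarith [ystar_add_le_scs1Y hin hw hε11 hj,
              ystar_three_mul_add_two_le hin hw hK4 hK8 hε11 hi hx hj]
      _ = _ := by rw [sum_add_distrib, ← mul_sum, sum_const, card_range, nsmul_eq_mul]
  have hkn : (k : ℝ) * (11 * ε + (8 * Y + 45 * n * ε)) ≤ n * (11 * ε + (8 * Y + 45 * n * ε)) :=
    mul_le_mul_of_nonneg_right (by exact_mod_cast hk.trans hin.nc_le) (by positivity)
  have hY := sum_scs1Y hk ε ystar
  have htail : 0 ≤ ∑ m ∈ range (nc - k), ystar (3 * k + m) := sum_nonneg fun _ _ => hw.col_nonneg _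
  linarith [le_mul_of_one_le_left hY0 hn, mul_le_mul_of_nonneg_right hnn hε0]

end Equilibrium

/-- Theorem: if `4 ≤ K ≤ 8`, `0 ≤ ε < 1/(240 n²)` and `(x*, y*)` is an `ε`-WSNE of
`(A', B')`, then the renormalizations defining the translated profile `(x, y)` are
valid and `(x, y)` is a `(3950·n²·ε)`-WSNE of `(A, B)`. -/
theorem stmt7 (n nr nc k : ℕ) (K ε : ℝ) (A B : ℕ → ℕ → ℝ) (xstar ystar : ℕ → ℝ)
    (hK4 : 4 ≤ K) (hK8 : K ≤ 8)
    (hin : Scs1Input n nr nc k K A B)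
    (hε0 : 0 ≤ ε) (hε : ε < 1 / (240 * (n:ℝ)^2))
    (hwsne : IsWSNE (2*k+nr) (2*k+nc) (scs1A k K A) (scs1B k B) xstar ystar ε) :
    (0 < ∑ i ∈ range nr, xstar (2*k+i)) ∧
    (0 < ∑ j ∈ range nc, scs1Y k ε ystar j) ∧
    IsWSNE nr nc A B
      (fun i => xstar (2*k+i) / ∑ i' ∈ range nr, xstar (2*k+i'))
      (fun j => scs1Y k ε ystar j / ∑ j' ∈ range nc, scs1Y k ε ystar j')
      (3950 * (n:ℝ)^2 * ε) := by
  have hk := hin.k_le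
  have hn : 1 ≤ (n : ℝ) := by
    rcases Nat.eq_zero_or_pos n with rfl | hn
    · norm_num at hε; linarith
    · exact_mod_cast hn
  have hε240 : 240 * (n : ℝ) ^ 2 * ε < 1 := by rwa [lt_div_iff₀ (by positivity), mul_comm] at hε
  have hε11 : 11 * (n : ℝ) * ε < 1 := by nlinarith
  have hX := one_le_mul_sum_xstar hin hwsne hK4 hK8 hε11
  have hY := one_le_mul_sum_scs1Y hin hwsne hK4 hK8 hε240
  have hXpos := pos_of_mul_pos_right (one_pos.trans_le hX) (by positivity)
  have hYpos := pos_of_mul_pos_right (one_pos.trans_le hY) (by positivity)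
  refine ⟨hXpos, hYpos, isWSNE_div_sum (fun i => hwsne.row_nonneg _)
    (fun i hi => hwsne.row_eq_zero (by omega)) hXpos (scs1Y_nonneg hwsne.col_nonneg)
    (fun j hj => by simpa [scs1Y, show ¬ j < k by omega] using hwsne.col_eq_zero (by omega))
    hYpos ?_ ?_⟩
  · intro i hi hx i' hi'
    have hbest := hwsne.rowPayoff_sub_le (by omega) hx (i' := 2 * k + i') (by omega)
    have happrox := abs_le.mp (abs_rowPayoff_enc_sub_le hin hwsne hK4 hK8 hε11 hi)
    have happrox' := abs_le.mp (abs_rowPayoff_enc_sub_le hin hwsne hK4 hK8 hε11 hi')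
    nlinarith [mul_le_mul_of_nonneg_left hY (by positivity : (0 : ℝ) ≤ n * ε)]
  · intro j hj hy j' hj'
    have hbest := hwsne.colPayoff_sub_le (simCol_lt hk hj)
      (ystar_simCol_pos_of_scs1Y_pos hin hwsne hK4 hε11 hy) (simCol_lt hk hj')
    rw [colPayoff_scs1B_simCol, colPayoff_scs1B_simCol] at hbest
    nlinarith [mul_le_mul_of_nonneg_left hX (by positivity : (0 : ℝ) ≤ n * ε)]
end

section
/- Let (A,B) and (A′,B′) be as in the type-one single column simulation with 4 ≤ K ≤ 8, let 0 ≤ ε < 1/(3n), and let (x*,y*) be an ε-WSNE of (A′,B′). Then for each column j < k of A, if P(cb₁ʲ) > 0 then P(rbʲ) > 0. -/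
open Finset
open scoped Classical

/-!
Suppose the row player ignores the row block `rbʲ` while the column player plays a column
`c ∈ cb₁ʲ`. In `B'` the column `c` is non-zero only on `rbʲ` (the block `T`), so `c` earns
the column player nothing. But every row of `B'` has an entry `≥ 1` and some row carries
probability at least `1 / (2k + nr) ≥ 1 / (3n)`, so some column earns at least `1 / (3n) > ε`,
and `c` is not an `ε`-best response.
-/

lemma exists_one_div_le_of_sum_range_eq_one {m : ℕ} {x : ℕ → ℝ}
    (hx : ∑ i ∈ range m, x i = 1) : ∃ i < m, 1 / (m : ℝ) ≤ x i := by
  have hm : m ≠ 0 := by rintro rfl; simp at hx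
  obtain ⟨i, hi, hle⟩ := exists_le_of_sum_le (f := fun _ => 1 / (m : ℝ)) (g := x)
    (nonempty_range_iff.mpr hm) (by simp [hx, hm])
  exact ⟨i, mem_range.mp hi, hle⟩

lemma le_sum_mul_of_one_le {m i₀ : ℕ} {x b : ℕ → ℝ} (hx : ∀ i, 0 ≤ x i)
    (hb : ∀ i < m, 0 ≤ b i) (hi₀ : i₀ < m) (hb₀ : 1 ≤ b i₀) :
    x i₀ ≤ ∑ i ∈ range m, x i * b i :=
  calc x i₀ ≤ x i₀ * b i₀ := le_mul_of_one_le_right (hx i₀) hb₀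
    _ ≤ ∑ i ∈ range m, x i * b i :=
      single_le_sum (fun i hi => mul_nonneg (hx i) (hb i (mem_range.mp hi))) (mem_range.mpr hi₀)

namespace IsWSNE

variable {nr nc : ℕ} {A B : ℕ → ℕ → ℝ} {x y : ℕ → ℝ} {ε : ℝ}

theorem one_div_sub_le_col_payoff (h : IsWSNE nr nc A B x y ε)
    (hB : ∀ i < nr, ∀ j < nc, 0 ≤ B i j) (hrow : ∀ i < nr, ∃ j < nc, 1 ≤ B i j)
    {j : ℕ} (hj : j < nc) (hy : 0 < y j) :
    1 / (nr : ℝ) - ε ≤ ∑ i ∈ range nr, x i * B i j := by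
  obtain ⟨hx0, -, hxsum, -, -, -, -, hcol⟩ := h
  obtain ⟨i₀, hi₀, hxi₀⟩ := exists_one_div_le_of_sum_range_eq_one hxsum
  obtain ⟨j₀, hj₀, hBj₀⟩ := hrow i₀ hi₀
  have := le_sum_mul_of_one_le hx0 (fun i hi => hB i hi j₀ hj₀) hi₀ hBj₀
  linarith [hcol j hj hy j₀ hj₀]

end IsWSNE

section Scs1B

variable {k nr nc : ℕ} {B : ℕ → ℕ → ℝ}

lemma scs1B_nonneg_s8 (hk : k ≤ nc) (hB : ∀ i < nr, ∀ j < nc, 0 ≤ B i j)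
    {r c : ℕ} (hr : r < 2*k + nr) (hc : c < 2*k + nc) : 0 ≤ scs1B k B r c := by
  unfold scs1B
  split_ifs <;> first
    | exact hB (r - 2*k) (by omega) _ (by omega)
    | norm_num

lemma scs1B_exists_one_le (hk : k ≤ nc) (hBrow : ∀ i < nr, ∃ j < nc, 1 ≤ B i j)
    {r : ℕ} (hr : r < 2*k + nr) : ∃ c < 2*k + nc, 1 ≤ scs1B k B r c := by
  by_cases hrk : r < 2*k
  · by_cases hpar : r % 2 = 0
    · exact ⟨3*(r/2) + 1, by omega, by simp [scs1B, hrk, hpar]⟩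
    · exact ⟨3*(r/2), by omega, by simp [scs1B, hrk, hpar]⟩
  obtain ⟨j, hj, hBj⟩ := hBrow (r - 2*k) (by omega)
  by_cases hjk : j < k
  · refine ⟨3*j + 2, by omega, ?_⟩
    have hdiv : (3*j + 2) / 3 = j := by omega
    simpa [scs1B, hrk, show 3*j + 2 < 3*k by omega, hdiv] using hBj
  · refine ⟨2*k + j, by omega, ?_⟩
    simpa [scs1B, hrk, show ¬ 2*k + j < 3*k by omega] using hBj

lemma scs1B_eq_zero_of_cb₁ {r c : ℕ} (hc : c < 3*k) (hc2 : c % 3 ≠ 2) (hr : r / 2 ≠ c / 3) :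
    scs1B k B r c = 0 := by
  unfold scs1B
  split_ifs <;> first | rfl | omega

lemma sum_mul_scs1B_eq_zero_of_cb₁ {x : ℕ → ℝ} {c : ℕ} (hc : c < 3*k) (hc2 : c % 3 ≠ 2)
    (hx : x (2*(c/3)) = 0) (hx' : x (2*(c/3) + 1) = 0) :
    ∑ i ∈ range (2*k + nr), x i * scs1B k B i c = 0 := by
  refine sum_eq_zero fun i _ => ?_
  by_cases hi : i / 2 = c / 3
  · obtain rfl | rfl : i = 2*(c/3) ∨ i = 2*(c/3) + 1 := by omega
    · simp [hx]
    · simp [hx']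
  · simp [scs1B_eq_zero_of_cb₁ hc hc2 hi]

end Scs1B

theorem stmt8_general (n nr nc k : ℕ) (K ε : ℝ) (A B : ℕ → ℕ → ℝ) (xstar ystar : ℕ → ℝ)
    (hin : Scs1Input n nr nc k K A B)
    (hε : ε < 1 / (3 * (n:ℝ)))
    (hwsne : IsWSNE (2*k+nr) (2*k+nc) (scs1A k K A) (scs1B k B) xstar ystar ε) :
    ∀ j < k, 0 < ystar (3*j) + ystar (3*j+1) → 0 < xstar (2*j) + xstar (2*j+1) := by
  obtain ⟨hnr, hnc, hk, -, hB, -, -, hBrow, -⟩ := hin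
  have hx0 : ∀ i, 0 ≤ xstar i := hwsne.1
  have hy0 : ∀ c, 0 ≤ ystar c := hwsne.2.2.2.1
  intro j hj hy
  by_contra! hrb
  have hx : xstar (2*j) = 0 := le_antisymm (by linarith [hx0 (2*j+1)]) (hx0 _)
  have hx' : xstar (2*j+1) = 0 := le_antisymm (by linarith [hx0 (2*j)]) (hx0 _)
  obtain ⟨c, hcj, hc2, hyc⟩ : ∃ c, c / 3 = j ∧ c % 3 ≠ 2 ∧ 0 < ystar c := by
    by_cases h : 0 < ystar (3*j)
    · exact ⟨3*j, by omega, by omega, h⟩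
    · exact ⟨3*j + 1, by omega, by omega, by linarith [hy0 (3*j)]⟩
  have hpay : ∑ i ∈ range (2*k + nr), xstar i * scs1B k B i c = 0 :=
    sum_mul_scs1B_eq_zero_of_cb₁ (by omega) hc2 (hcj ▸ hx) (hcj ▸ hx')
  have hbound := hwsne.one_div_sub_le_col_payoff
    (fun r hr c hc => scs1B_nonneg_s8 hk (fun i hi j hj => (hB i hi j hj).1) hr hc)
    (fun r hr => scs1B_exists_one_le hk hBrow hr) (by omega) hyc
  have hsize : 1 / (3 * (n:ℝ)) ≤ 1 / ((2*k + nr : ℕ) : ℝ) :=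
    one_div_le_one_div_of_le (by exact_mod_cast (by omega : 0 < 2*k + nr))
      (by exact_mod_cast (by omega : 2*k + nr ≤ 3*n))
  linarith

/-- If `0 ≤ ε < 1/(3n)` and `(x*, y*)` is an `ε`-WSNE of `(A', B')`, then for every
column `j < k` of `A`: if the column player puts positive probability on the
column block `cb₁ʲ = {3j, 3j+1}`, then the row player puts positive probability on
the row block `rbʲ = {2j, 2j+1}`. -/
theorem stmt8 (n nr nc k : ℕ) (K ε : ℝ) (A B : ℕ → ℕ → ℝ) (xstar ystar : ℕ → ℝ)
    (hK4 : 4 ≤ K) (hK8 : K ≤ 8)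
    (hin : Scs1Input n nr nc k K A B)
    (hε0 : 0 ≤ ε) (hε : ε < 1 / (3 * (n:ℝ)))
    (hwsne : IsWSNE (2*k+nr) (2*k+nc) (scs1A k K A) (scs1B k B) xstar ystar ε) :
    ∀ j < k, 0 < ystar (3*j) + ystar (3*j+1) → 0 < xstar (2*j) + xstar (2*j+1) :=
  stmt8_general n nr nc k K ε A B xstar ystar hin hε hwsne
end
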